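/- arXiv:1703.01738 — 8 statements merged into one kernel-verified Lean document; each statement's English description precedes it below -/
import Mathlib

section
/- Let φ₁ > 0 and let f : [φ₁,∞) → ℝ be continuous with f(φ) > 0 for all φ ≥ φ₁ and lim_{φ→∞} f(φ) = 0. Suppose there exist constants a̅ > 0 and α ∈ (0,1) such that 0 < f(φ) - f(φ+2π) ≤ a̅ φ^{-α-1} for all φ ≥ φ₁. Then there exists a constant m̅ > 0 such that f(φ) ≤ m̅ φ^{-α} for all φ ≥ φ₁. -/
/-!
Compare `f` with `g x = a / (2πα) · (x - 2π) ^ (-α)`. By the mean value theorem,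
`g x - g (x + 2π) ≥ a x ^ (-α - 1) ≥ f x - f (x + 2π)`, so `f - g` does not decrease along
steps of `2π`; since it tends to `0`, it is `≤ 0`. Hence `f (φ + 2π) ≤ a / (2πα) · φ ^ (-α)`, and one
more step of the hypothesis, with `φ ^ (-α - 1) ≤ φ ^ (-α) / φ₁`, bounds `f φ`.
-/

open Set Filter Real

lemma mul_sub_mul_rpow_le_rpow_neg_sub_rpow_neg {p u v : ℝ} (hp : 0 ≤ p) (hu : 0 < u)
    (huv : u < v) : p * (v - u) * v ^ (-p - 1) ≤ u ^ (-p) - v ^ (-p) := by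
  obtain ⟨c, ⟨huc, hcv⟩, hslope⟩ := exists_hasDerivAt_eq_slope (fun x ↦ x ^ (-p))
    (fun x ↦ -p * x ^ (-p - 1)) huv
    (fun x hx ↦ (continuousAt_id.rpow_const (Or.inl (hu.trans_le hx.1).ne')).continuousWithinAt)
    (fun x hx ↦ hasDerivAt_rpow_const (Or.inl (hu.trans hx.1).ne'))
  have hc : 0 < c := hu.trans huc
  have hdiff : u ^ (-p) - v ^ (-p) = p * (v - u) * c ^ (-p - 1) := by
    rw [eq_div_iff (sub_pos.2 huv).ne'] at hslope
    linear_combination hslope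
  rw [hdiff]
  exact mul_le_mul_of_nonneg_left (rpow_le_rpow_of_nonpos hc hcv.le (by linarith))
    (mul_nonneg hp (sub_pos.2 huv).le)

lemma le_zero_of_le_add_of_tendsto_zero {F : ℝ → ℝ} {x₀ T : ℝ} (hT : 0 < T)
    (hstep : ∀ x ≥ x₀, F x ≤ F (x + T)) (hlim : Tendsto F atTop (nhds 0)) :
    ∀ x ≥ x₀, F x ≤ 0 := by
  intro x hx
  have hiter : ∀ n : ℕ, F x ≤ F (x + n * T) := by
    intro n
    induction n with
    | zero => simp
    | succ n ih =>
      calc F x ≤ F (x + n * T) := ih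
        _ ≤ F (x + n * T + T) := hstep _ (by nlinarith [n.cast_nonneg (α := ℝ)])
        _ = F (x + (n + 1 : ℕ) * T) := by push_cast; ring_nf
  have hseq : Tendsto (fun n : ℕ ↦ x + n * T) atTop atTop :=
    tendsto_atTop_add_const_left _ x (tendsto_natCast_atTop_atTop.atTop_mul_const hT)
  exact ge_of_tendsto' (hlim.comp hseq) hiter

lemma le_mul_rpow_neg_sub_of_sub_le {f : ℝ → ℝ} {x₁ T a α : ℝ} (hx₁ : 0 < x₁) (hT : 0 < T)
    (ha : 0 ≤ a) (hα : 0 < α) (hlim : Tendsto f atTop (nhds 0))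
    (hdec : ∀ x ≥ x₁, f x - f (x + T) ≤ a * x ^ (-α - 1)) :
    ∀ x ≥ x₁ + T, f x ≤ a / (T * α) * (x - T) ^ (-α) := by
  set g : ℝ → ℝ := fun x ↦ a / (T * α) * (x - T) ^ (-α)
  have hg : Tendsto g atTop (nhds 0) := by
    simpa [g, sub_eq_add_neg] using ((tendsto_rpow_neg_atTop hα).comp
      (tendsto_atTop_add_const_right _ (-T) tendsto_id)).const_mul (a / (T * α))
  have hstep : ∀ x ≥ x₁ + T, f x - g x ≤ f (x + T) - g (x + T) := by
    intro x hx
    have htangent := mul_sub_mul_rpow_le_rpow_neg_sub_rpow_neg hα.le (by linarith : 0 < x - T)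
      (by linarith : x - T < x)
    have hgap : a * x ^ (-α - 1) ≤ g x - g (x + T) :=
      calc a * x ^ (-α - 1) = a / (T * α) * (α * (x - (x - T)) * x ^ (-α - 1)) := by
            field_simp; ring
        _ ≤ g x - g (x + T) := by
            simp only [g, add_sub_cancel_right, ← mul_sub]
            gcongr
    linarith [hdec x (by linarith), hgap]
  intro x hx
  linarith [le_zero_of_le_add_of_tendsto_zero hT hstep (by simpa using hlim.sub hg) x hx]

theorem stmt_0_general (φ₁ : ℝ) (hφ₁ : 0 < φ₁) (f : ℝ → ℝ)
    (hlim : Tendsto f atTop (nhds 0))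
    (a α : ℝ) (ha : 0 < a) (hα : α ∈ Ioo (0:ℝ) 1)
    (hdec : ∀ φ ≥ φ₁, 0 < f φ - f (φ + 2 * π) ∧ f φ - f (φ + 2 * π) ≤ a * φ ^ (-α - 1)) :
    ∃ m > 0, ∀ φ ≥ φ₁, f φ ≤ m * φ ^ (-α) := by
  obtain ⟨hα₀, -⟩ := hα
  have hT : 0 < 2 * π := by positivity
  refine ⟨a / φ₁ + a / (2 * π * α), by positivity, fun φ hφ ↦ ?_⟩
  have hφ₀ : 0 < φ := hφ₁.trans_le hφ
  have hshift := le_mul_rpow_neg_sub_of_sub_le hφ₁ hT ha.le hα₀ hlim (fun x hx ↦ (hdec x hx).2)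
    (φ + 2 * π) (by linarith)
  rw [add_sub_cancel_right] at hshift
  have hpow : φ ^ (-α - 1) ≤ φ₁⁻¹ * φ ^ (-α) := by
    rw [rpow_sub_one hφ₀.ne', div_eq_mul_inv, mul_comm]
    gcongr
  calc f φ = (f φ - f (φ + 2 * π)) + f (φ + 2 * π) := by ring
    _ ≤ a * φ ^ (-α - 1) + a / (2 * π * α) * φ ^ (-α) := add_le_add (hdec φ hφ).2 hshift
    _ ≤ a * (φ₁⁻¹ * φ ^ (-α)) + a / (2 * π * α) * φ ^ (-α) := by gcongr
    _ = (a / φ₁ + a / (2 * π * α)) * φ ^ (-α) := by ring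

theorem stmt_0 (φ₁ : ℝ) (hφ₁ : 0 < φ₁) (f : ℝ → ℝ)
    (hf : ContinuousOn f (Ici φ₁))
    (hpos : ∀ φ ≥ φ₁, 0 < f φ)
    (hlim : Tendsto f atTop (nhds 0))
    (a α : ℝ) (ha : 0 < a) (hα : α ∈ Ioo (0:ℝ) 1)
    (hdec : ∀ φ ≥ φ₁, 0 < f φ - f (φ + 2 * π) ∧ f φ - f (φ + 2 * π) ≤ a * φ ^ (-α - 1)) :
    ∃ m > 0, ∀ φ ≥ φ₁, f φ ≤ m * φ ^ (-α) :=
  stmt_0_general φ₁ hφ₁ f hlim a α ha hα hdec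
end

section
/- Under the assumptions of the spiral criterion (f continuous on [φ₁,∞) with φ₁ > 0, f(φ) → 0, m̲ φ^{-α} ≤ f(φ) ≤ m̅ φ^{-α}, and 0 < f(φ) - f(φ+2π) ≤ a̅ φ^{-α-1} for all φ ≥ φ₁, with α ∈ (0,1) and positive constants m̲, m̅, a̅), for every sufficiently small ε ∈ (0,1), the two-dimensional Lebesgue measure of the ε-neighborhood N(Γ,ε) of the tail Γ(φ₂(ε),∞) with φ₂(ε) = (2a̅/ε)^{1/(α+1)} satisfies π m̲² [(2a̅)^{1/(α+1)} + 2π]^{-2α} ε^{2α/(α+1)} ≤ |N(Γ,ε)| ≤ π [m̅ (2a̅)^{-α/(α+1)} + 1]² ε^{2α/(α+1)}. -/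
/-!
Put φ₂ = (2a/ε)^{1/(α+1)}, so that a φ₂^{-α-1} = ε/2 and consecutive turns of the tail are
radially at most ε apart: f φ - f (φ + 2π) ≤ ε for φ ≥ φ₂. Along any ray the radii f (θ + 2πn)
of the tail start, on the first turn, above m̲ (φ₂ + 2π)^{-α}, tend to 0 and drop by at most ε per
turn, so they pass within ε of every smaller radius: the disc of radius m̲ (φ₂ + 2π)^{-α} lies in
N(Γ, ε). Conversely the tail lies in the disc of radius m̅ φ₂^{-α}, hence N(Γ, ε) in the disc of
radius m̅ φ₂^{-α} + ε. Both radii are of order ε^{α/(α+1)}.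
-/

open Set Filter Real Metric MeasureTheory
open scoped Topology

theorem exists_mem_Ico_of_sub_succ_le {α : Type*} [AddCommGroup α] [LinearOrder α]
    [IsOrderedAddMonoid α] {g : ℕ → α} {r ε : α} (h0 : r ≤ g 0)
    (hstep : ∀ n, g n - g (n + 1) ≤ ε) (hex : ∃ n, g n < r + ε) :
    ∃ n, g n ∈ Ico r (r + ε) := by
  classical
  refine ⟨Nat.find hex, ?_, Nat.find_spec hex⟩
  rcases hN : Nat.find hex with _ | M
  · exact h0
  · have hgM : r + ε ≤ g M := not_lt.1 (Nat.find_min hex (by omega))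
    rw [← add_le_add_iff_right ε]
    exact hgM.trans (sub_le_iff_le_add'.1 (hstep M))

theorem EuclideanSpace.norm_eq_abs_of_ofLp_eq_polar {p : EuclideanSpace ℝ (Fin 2)} {r θ : ℝ}
    (hp : p.ofLp = ![r * cos θ, r * sin θ]) : ‖p‖ = |r| := by
  rw [EuclideanSpace.norm_eq, Fin.sum_univ_two, hp]
  simp only [Matrix.cons_val_zero, Matrix.cons_val_one, Real.norm_eq_abs, sq_abs]
  rw [← sqrt_sq_eq_abs]
  congr 1
  linear_combination r ^ 2 * sin_sq_add_cos_sq θ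

theorem EuclideanSpace.dist_eq_abs_of_ofLp_eq_polar {p q : EuclideanSpace ℝ (Fin 2)} {r s θ : ℝ}
    (hp : p.ofLp = ![r * cos θ, r * sin θ]) (hq : q.ofLp = ![s * cos θ, s * sin θ]) :
    dist p q = |r - s| := by
  rw [dist_eq_norm]
  apply EuclideanSpace.norm_eq_abs_of_ofLp_eq_polar (θ := θ)
  rw [WithLp.ofLp_sub, hp, hq]
  ext i
  fin_cases i <;> simp [sub_mul]

theorem EuclideanSpace.exists_ofLp_eq_polar (p : EuclideanSpace ℝ (Fin 2)) (ψ : ℝ) :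
    ∃ θ ∈ Ico ψ (ψ + 2 * π), p.ofLp = ![‖p‖ * cos θ, ‖p‖ * sin θ] := by
  set z : ℂ := ⟨p 0, p 1⟩
  have hz : ‖z‖ = ‖p‖ := by
    rw [EuclideanSpace.norm_eq, Fin.sum_univ_two, Complex.norm_def, Complex.normSq_mk]
    simp [sq, abs_mul_abs_self]
  set θ := toIcoMod two_pi_pos ψ z.arg
  have hθ : θ + toIcoDiv two_pi_pos ψ z.arg * (2 * π) = z.arg := by
    rw [← zsmul_eq_mul, toIcoMod_add_toIcoDiv_zsmul]
  have hcos : cos θ = cos z.arg := by rw [← hθ, cos_add_int_mul_two_pi]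
  have hsin : sin θ = sin z.arg := by rw [← hθ, sin_add_int_mul_two_pi]
  refine ⟨θ, toIcoMod_mem_Ico _ _ _, ?_⟩
  ext i
  fin_cases i
  · simp [hcos, ← hz, Complex.norm_mul_cos_arg, z]
  · simp [hsin, ← hz, Complex.norm_mul_sin_arg, z]

/-- The tail `Γ(ψ, ∞)` of the spiral `r = f φ`. -/
def spiralTail (f : ℝ → ℝ) (ψ : ℝ) : Set (EuclideanSpace ℝ (Fin 2)) :=
  {p | ∃ φ ≥ ψ, p = ![f φ * cos φ, f φ * sin φ]}

theorem spiralTail_subset_closedBall {f : ℝ → ℝ} {ψ R : ℝ} (hR : ∀ φ ≥ ψ, |f φ| ≤ R) :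
    spiralTail f ψ ⊆ closedBall 0 R := by
  rintro p ⟨φ, hφ, hp⟩
  rw [mem_closedBall_zero_iff, EuclideanSpace.norm_eq_abs_of_ofLp_eq_polar hp]
  exact hR φ hφ

theorem closedBall_subset_cthickening_spiralTail {f : ℝ → ℝ} {ψ ρ ε : ℝ} (hε : 0 < ε)
    (hlim : Tendsto f atTop (𝓝 0)) (hρ : ∀ φ ∈ Ico ψ (ψ + 2 * π), ρ ≤ f φ)
    (hstep : ∀ φ ≥ ψ, f φ - f (φ + 2 * π) ≤ ε) :
    closedBall 0 ρ ⊆ cthickening ε (spiralTail f ψ) := by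
  intro p hp
  obtain ⟨θ, hθ, hpθ⟩ := EuclideanSpace.exists_ofLp_eq_polar p ψ
  set φ : ℕ → ℝ := fun n => θ + n * (2 * π)
  have hφψ (n : ℕ) : ψ ≤ φ n := le_add_of_le_of_nonneg hθ.1 (by positivity)
  have hφ_tendsto : Tendsto φ atTop atTop :=
    tendsto_atTop_add_const_left _ _ (tendsto_natCast_atTop_atTop.atTop_mul_const two_pi_pos)
  obtain ⟨n, hn⟩ : ∃ n, f (φ n) ∈ Ico ‖p‖ (‖p‖ + ε) := by
    refine exists_mem_Ico_of_sub_succ_le ?_ (fun n => ?_) ?_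
    · simpa [φ] using (mem_closedBall_zero_iff.1 hp).trans (hρ θ hθ)
    · simpa [φ, add_mul, add_assoc] using hstep (φ n) (hφψ n)
    · exact ((hlim.comp hφ_tendsto).eventually (gt_mem_nhds (by positivity))).exists
  refine mem_cthickening_of_dist_le p (WithLp.toLp 2 ![f (φ n) * cos (φ n), f (φ n) * sin (φ n)])
    ε _ ⟨φ n, hφψ n, rfl⟩ ?_
  rw [EuclideanSpace.dist_eq_abs_of_ofLp_eq_polar hpθ (s := f (φ n)) (by
    simp [φ, cos_add_nat_mul_two_pi, sin_add_nat_mul_two_pi])]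
  exact abs_le.2 ⟨by linarith [hn.2], by linarith [hn.1]⟩

section Threshold

variable {c α ε : ℝ}

theorem div_rpow_rpow_neg (hc : 0 ≤ c) (hε : 0 < ε) (γ β : ℝ) :
    ((c / ε) ^ γ) ^ (-β) = c ^ (-(γ * β)) * ε ^ (γ * β) := by
  rw [← rpow_mul (div_nonneg hc hε.le), div_rpow hc hε.le, mul_neg, rpow_neg hε.le, div_inv_eq_mul]

theorem mul_two_mul_div_rpow_neg_sub_one {a : ℝ} (ha : 0 < a) (hε : 0 < ε) (hα : α + 1 ≠ 0) :
    a * ((2 * a / ε) ^ (1 / (α + 1))) ^ (-α - 1) = ε / 2 := by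
  rw [← neg_add', div_rpow_rpow_neg (by positivity) hε, one_div_mul_cancel hα, rpow_neg_one,
    rpow_one]
  field_simp

theorem rpow_neg_mul_le_div_rpow_add_rpow_neg {b : ℝ} (hc : 0 < c) (hb : 0 ≤ b) (hα : 0 ≤ α)
    (hε : 0 < ε) (hε1 : ε ≤ 1) :
    (c ^ (1 / (α + 1)) + b) ^ (-α) * ε ^ (α / (α + 1)) ≤
      ((c / ε) ^ (1 / (α + 1)) + b) ^ (-α) := by
  set γ := 1 / (α + 1)
  have hγ : 0 ≤ γ := by positivity
  have hε_pow : 1 ≤ ε ^ (-γ) := one_le_rpow_of_pos_of_le_one_of_nonpos hε hε1 (by linarith)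
  have hle : (c / ε) ^ γ + b ≤ (c ^ γ + b) * ε ^ (-γ) := by
    rw [div_rpow hc.le hε.le, div_eq_mul_inv, ← rpow_neg hε.le, add_mul]
    gcongr
    exact le_mul_of_one_le_right hb hε_pow
  calc (c ^ γ + b) ^ (-α) * ε ^ (α / (α + 1)) = ((c ^ γ + b) * ε ^ (-γ)) ^ (-α) := by
        rw [mul_rpow (by positivity) (by positivity), ← rpow_mul hε.le, neg_mul_neg,
          one_div_mul_eq_div]
    _ ≤ ((c / ε) ^ γ + b) ^ (-α) := rpow_le_rpow_of_nonpos (by positivity) hle (by linarith)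

theorem mul_div_rpow_rpow_neg_add_le {m : ℝ} (hc : 0 ≤ c) (hα : 0 ≤ α) (hε : 0 < ε)
    (hε1 : ε ≤ 1) :
    m * ((c / ε) ^ (1 / (α + 1))) ^ (-α) + ε ≤
      (m * c ^ (-(α / (α + 1))) + 1) * ε ^ (α / (α + 1)) := by
  have hε_le : ε ≤ ε ^ (α / (α + 1)) :=
    self_le_rpow_of_le_one hε.le hε1 ((div_le_one (by linarith)).2 (by linarith))
  rw [div_rpow_rpow_neg hc hε, one_div_mul_eq_div]
  linarith

end Threshold

theorem rpow_two_mul {x : ℝ} (hx : 0 ≤ x) (y : ℝ) : x ^ (2 * y) = (x ^ y) ^ 2 := by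
  rw [mul_comm, ← Nat.cast_ofNat, rpow_mul_natCast hx]

theorem EuclideanSpace.volume_closedBall_fin_two_of_nonneg (x : EuclideanSpace ℝ (Fin 2))
    {r : ℝ} (hr : 0 ≤ r) : volume (closedBall x r) = ENNReal.ofReal (π * r ^ 2) := by
  rw [volume_closedBall_fin_two, ← ENNReal.ofReal_pow hr, ← ENNReal.ofReal_mul (by positivity),
    mul_comm]

theorem stmt_2_general (φ₁ : ℝ) (f : ℝ → ℝ)
    (hlim : Tendsto f atTop (nhds 0))
    (m₁ m₂ a α : ℝ) (hm₁ : 0 < m₁) (hm₂ : 0 < m₂) (ha : 0 < a) (hα : α ∈ Ioo (0:ℝ) 1)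
    (hlow : ∀ φ ≥ φ₁, m₁ * φ ^ (-α) ≤ f φ)
    (hup : ∀ φ ≥ φ₁, f φ ≤ m₂ * φ ^ (-α))
    (hdec : ∀ φ ≥ φ₁, 0 < f φ - f (φ + 2 * π) ∧ f φ - f (φ + 2 * π) ≤ a * φ ^ (-α - 1)) :
    ∀ᶠ ε in nhdsWithin (0:ℝ) (Ioi 0), ε < 1 →
      (ENNReal.ofReal (π * m₁ ^ 2 * ((2 * a) ^ (1 / (α + 1)) + 2 * π) ^ (-(2 * α)) *
            ε ^ (2 * α / (α + 1))) ≤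
          volume (cthickening ε {p : EuclideanSpace ℝ (Fin 2) |
            ∃ φ ≥ (2 * a / ε) ^ (1 / (α + 1)), p = ![f φ * Real.cos φ, f φ * Real.sin φ]}) ∧
        volume (cthickening ε {p : EuclideanSpace ℝ (Fin 2) |
            ∃ φ ≥ (2 * a / ε) ^ (1 / (α + 1)), p = ![f φ * Real.cos φ, f φ * Real.sin φ]}) ≤
          ENNReal.ofReal (π * (m₂ * (2 * a) ^ (-(α / (α + 1))) + 1) ^ 2 *
            ε ^ (2 * α / (α + 1)))) := by
  obtain ⟨hα0, -⟩ := hα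
  have hthreshold : Tendsto (fun ε : ℝ => (2 * a / ε) ^ (1 / (α + 1))) (𝓝[>] 0) atTop :=
    (tendsto_rpow_atTop (by positivity)).comp <|
      (tendsto_inv_nhdsGT_zero.const_mul_atTop (by positivity : (0 : ℝ) < 2 * a)).congr fun ε => by
        rw [div_eq_mul_inv]
  filter_upwards [self_mem_nhdsWithin, hthreshold.eventually_ge_atTop φ₁]
    with ε (hε : 0 < ε) hφ₁φ₂ hε1
  change _ ≤ volume (cthickening ε (spiralTail f _)) ∧ volume (cthickening ε (spiralTail f _)) ≤ _
  set φ₂ := (2 * a / ε) ^ (1 / (α + 1))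
  have hφ₂ : 0 < φ₂ := by positivity
  have hstep : ∀ φ ≥ φ₂, f φ - f (φ + 2 * π) ≤ ε := fun φ hφ => calc
    f φ - f (φ + 2 * π) ≤ a * φ ^ (-α - 1) := (hdec φ (hφ₁φ₂.trans hφ)).2
    _ ≤ a * φ₂ ^ (-α - 1) :=
      mul_le_mul_of_nonneg_left (rpow_le_rpow_of_nonpos hφ₂ hφ (by linarith)) ha.le
    _ = ε / 2 := mul_two_mul_div_rpow_neg_sub_one ha hε (by positivity)
    _ ≤ ε := half_le_self hε.le
  constructor
  · have hρ : ∀ φ ∈ Ico φ₂ (φ₂ + 2 * π), m₁ * (φ₂ + 2 * π) ^ (-α) ≤ f φ := fun φ hφ => calc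
      m₁ * (φ₂ + 2 * π) ^ (-α) ≤ m₁ * φ ^ (-α) := mul_le_mul_of_nonneg_left
        (rpow_le_rpow_of_nonpos (hφ₂.trans_le hφ.1) hφ.2.le (by linarith)) hm₁.le
      _ ≤ f φ := hlow φ (hφ₁φ₂.trans hφ.1)
    calc _ ≤ ENNReal.ofReal (π * (m₁ * (φ₂ + 2 * π) ^ (-α)) ^ 2) := by
          refine ENNReal.ofReal_le_ofReal ?_
          rw [← mul_neg, mul_div_assoc, rpow_two_mul (by positivity), rpow_two_mul hε.le]
          calc _ = π * (m₁ * (((2 * a) ^ (1 / (α + 1)) + 2 * π) ^ (-α) * ε ^ (α / (α + 1)))) ^ 2 := by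
                ring
            _ ≤ π * (m₁ * (φ₂ + 2 * π) ^ (-α)) ^ 2 := by
                gcongr
                exact rpow_neg_mul_le_div_rpow_add_rpow_neg (by positivity) (by positivity)
                  hα0.le hε hε1.le
      _ = volume (closedBall 0 (m₁ * (φ₂ + 2 * π) ^ (-α))) :=
          (EuclideanSpace.volume_closedBall_fin_two_of_nonneg 0 (by positivity)).symm
      _ ≤ _ := measure_mono (closedBall_subset_cthickening_spiralTail hε hlim hρ hstep)
  · have hR : ∀ φ ≥ φ₂, |f φ| ≤ m₂ * φ₂ ^ (-α) := fun φ hφ => by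
      have hφ₀ : 0 < φ := hφ₂.trans_le hφ
      have hφ₁φ : φ₁ ≤ φ := hφ₁φ₂.trans hφ
      rw [abs_of_pos ((by positivity : 0 < m₁ * φ ^ (-α)).trans_le (hlow φ hφ₁φ))]
      calc f φ ≤ m₂ * φ ^ (-α) := hup φ hφ₁φ
        _ ≤ m₂ * φ₂ ^ (-α) :=
          mul_le_mul_of_nonneg_left (rpow_le_rpow_of_nonpos hφ₂ hφ (by linarith)) hm₂.le
    calc _ ≤ volume (closedBall 0 (ε + m₂ * φ₂ ^ (-α))) :=
          measure_mono <| (cthickening_subset_of_subset ε (spiralTail_subset_closedBall hR)).trans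
            (cthickening_closedBall hε.le (by positivity) 0).subset
      _ = ENNReal.ofReal (π * (m₂ * φ₂ ^ (-α) + ε) ^ 2) := by
          rw [EuclideanSpace.volume_closedBall_fin_two_of_nonneg 0 (by positivity), add_comm]
      _ ≤ _ := by
          refine ENNReal.ofReal_le_ofReal ?_
          rw [mul_div_assoc, rpow_two_mul hε.le]
          calc _ ≤ π * ((m₂ * (2 * a) ^ (-(α / (α + 1))) + 1) * ε ^ (α / (α + 1))) ^ 2 := by
                gcongr
                exact mul_div_rpow_rpow_neg_add_le (by positivity) hα0.le hε hε1.le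
            _ = _ := by ring

theorem stmt_2 (φ₁ : ℝ) (hφ₁ : 0 < φ₁) (f : ℝ → ℝ)
    (hf : ContinuousOn f (Ici φ₁))
    (hlim : Tendsto f atTop (nhds 0))
    (m₁ m₂ a α : ℝ) (hm₁ : 0 < m₁) (hm₂ : 0 < m₂) (ha : 0 < a) (hα : α ∈ Ioo (0:ℝ) 1)
    (hlow : ∀ φ ≥ φ₁, m₁ * φ ^ (-α) ≤ f φ)
    (hup : ∀ φ ≥ φ₁, f φ ≤ m₂ * φ ^ (-α))
    (hdec : ∀ φ ≥ φ₁, 0 < f φ - f (φ + 2 * π) ∧ f φ - f (φ + 2 * π) ≤ a * φ ^ (-α - 1)) :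
    ∀ᶠ ε in nhdsWithin (0:ℝ) (Ioi 0), ε < 1 →
      (ENNReal.ofReal (π * m₁ ^ 2 * ((2 * a) ^ (1 / (α + 1)) + 2 * π) ^ (-(2 * α)) *
            ε ^ (2 * α / (α + 1))) ≤
          volume (cthickening ε {p : EuclideanSpace ℝ (Fin 2) |
            ∃ φ ≥ (2 * a / ε) ^ (1 / (α + 1)), p = ![f φ * Real.cos φ, f φ * Real.sin φ]}) ∧
        volume (cthickening ε {p : EuclideanSpace ℝ (Fin 2) |
            ∃ φ ≥ (2 * a / ε) ^ (1 / (α + 1)), p = ![f φ * Real.cos φ, f φ * Real.sin φ]}) ≤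
          ENNReal.ofReal (π * (m₂ * (2 * a) ^ (-(α / (α + 1))) + 1) ^ 2 *
            ε ^ (2 * α / (α + 1)))) :=
  stmt_2_general φ₁ f hlim m₁ m₂ a α hm₁ hm₂ ha hα hlow hup hdec
end

section
/- Let G be a curve in ℝ² with finite diameter diam(G) = sup_{z,w ∈ G} dist(z,w). Then for every ε > 0, the two-dimensional Lebesgue measure of the closed ε-neighborhood satisfies |G_ε| ≥ 2ε · diam(G) + π ε². -/
/-!
Rotate the plane so that two points `z`, `w` of the curve realising its diameter lie on a
horizontal line. By connectedness every vertical line between them meets the curve, so its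
slice of `G_ε` has length at least `2ε`, and Fubini gives area `2ε · diam G` over the strip
between `z` and `w`. Outside the strip `G_ε` contains the left half of the disc of radius `ε`
about `z` and the right half of the one about `w`; translating the second half onto the first
disc completes it, so together they have area `πε²`.
-/

open Set Real Metric MeasureTheory

local notation "ℝ²" => EuclideanSpace ℝ (Fin 2)

theorem IsCompact.exists_dist_eq_diam {α : Type*} [PseudoMetricSpace α] {s : Set α}
    (hs : IsCompact s) (hne : s.Nonempty) : ∃ x ∈ s, ∃ y ∈ s, dist x y = diam s := by
  obtain ⟨⟨x, y⟩, ⟨hx, hy⟩, hmax⟩ :=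
    (hs.prod hs).exists_isMaxOn (hne.prod hne) continuous_dist.continuousOn
  refine ⟨x, hx, y, hy, le_antisymm (dist_le_diam_of_mem hs.isBounded hx hy) ?_⟩
  exact diam_le_of_forall_dist_le dist_nonneg fun x' hx' y' hy' => hmax (mk_mem_prod hx' hy')

theorem exists_linearIsometryEquiv_apply_eq {F : Type*} [NormedAddCommGroup F]
    [InnerProductSpace ℝ F] {u v : F} (h : ‖u‖ = ‖v‖) : ∃ e : F ≃ₗᵢ[ℝ] F, e u = v :=
  ⟨_, Submodule.reflection_sub h⟩

theorem Isometry.preimage_cthickening_image {α β : Type*} [PseudoEMetricSpace α]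
    [PseudoEMetricSpace β] {Φ : α → β} (hΦ : Isometry Φ) (δ : ℝ) (s : Set α) :
    Φ ⁻¹' cthickening δ (Φ '' s) = cthickening δ s := by
  ext x
  simp only [mem_preimage, mem_cthickening_iff, infEDist_image hΦ]

theorem LinearIsometryEquiv.volume_cthickening_image {E : Type*} [NormedAddCommGroup E]
    [InnerProductSpace ℝ E] [FiniteDimensional ℝ E] [MeasurableSpace E] [BorelSpace E]
    (e : E ≃ₗᵢ[ℝ] E) (δ : ℝ) (s : Set E) :
    volume (cthickening δ (e '' s)) = volume (cthickening δ s) := by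
  rw [← e.measurePreserving.measure_preimage isClosed_cthickening.nullMeasurableSet,
    e.isometry.preimage_cthickening_image]

theorem EuclideanSpace.measurePreserving_toLp_fin_two :
    MeasurePreserving (fun p : ℝ × ℝ => !₂[p.1, p.2]) :=
  (PiLp.volume_preserving_toLp (Fin 2)).comp (volume_preserving_finTwoArrow ℝ).symm

theorem EuclideanSpace.volume_eq_lintegral_volume_slice {A : Set (ℝ²)}
    (hA : MeasurableSet A) : volume A = ∫⁻ x, volume {y : ℝ | !₂[x, y] ∈ A} := by
  rw [← EuclideanSpace.measurePreserving_toLp_fin_two.measure_preimage hA.nullMeasurableSet,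
    Measure.volume_eq_prod, Measure.prod_apply]
  · rfl
  · exact EuclideanSpace.measurePreserving_toLp_fin_two.measurable hA

theorem EuclideanSpace.dist_toLp_fin_two_self_fst (r : ℝ²) (y : ℝ) :
    dist !₂[r 0, y] r = |y - r 1| := by
  simp [EuclideanSpace.dist_eq, Fin.sum_univ_two, Real.dist_eq, sq_abs, Real.sqrt_sq_eq_abs]

theorem Icc_subset_setOf_toLp_fin_two_mem_cthickening {S : Set (ℝ²)} {r : ℝ²} (hr : r ∈ S)
    (ε : ℝ) :
    Icc (r 1 - ε) (r 1 + ε) ⊆ {y | !₂[r 0, y] ∈ cthickening ε S} := fun y hy =>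
  closedBall_subset_cthickening hr ε <| by
    rw [mem_closedBall, EuclideanSpace.dist_toLp_fin_two_self_fst, abs_sub_le_iff]
    constructor <;> linarith [hy.1, hy.2]

theorem IsPreconnected.ofReal_le_volume_cthickening_inter_strip {S : Set (ℝ²)}
    (hS : IsPreconnected S) {p q : ℝ²} (hp : p ∈ S) (hq : q ∈ S) {ε : ℝ} (hε : 0 ≤ ε) :
    ENNReal.ofReal (2 * ε * (q 0 - p 0)) ≤
      volume (cthickening ε S ∩ {z | z 0 ∈ Ioc (p 0) (q 0)}) := by
  have hslice : ∀ x ∈ Ioc (p 0) (q 0), ENNReal.ofReal (2 * ε) ≤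
      volume {y : ℝ | !₂[x, y] ∈ cthickening ε S ∩ {z | z 0 ∈ Ioc (p 0) (q 0)}} := by
    intro x hx
    obtain ⟨r, hr, rfl⟩ : x ∈ (fun z : ℝ² => z 0) '' S :=
      (hS.image _ (PiLp.continuous_apply 2 _ 0).continuousOn).Icc_subset
        (mem_image_of_mem _ hp) (mem_image_of_mem _ hq) (Ioc_subset_Icc_self hx)
    calc ENNReal.ofReal (2 * ε) = volume (Icc (r 1 - ε) (r 1 + ε)) := by
          rw [Real.volume_Icc]; ring_nf
      _ ≤ _ := measure_mono fun y hy =>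
          show _ ∈ _ ∩ _ from ⟨Icc_subset_setOf_toLp_fin_two_mem_cthickening hr ε hy, hx⟩
  have hmeas : MeasurableSet (cthickening ε S ∩ {z | z 0 ∈ Ioc (p 0) (q 0)}) :=
    isClosed_cthickening.measurableSet.inter
      (measurableSet_Ioc.preimage (PiLp.continuous_apply 2 _ 0).measurable)
  calc ENNReal.ofReal (2 * ε * (q 0 - p 0))
      = ∫⁻ _ in Ioc (p 0) (q 0), ENNReal.ofReal (2 * ε) := by
        rw [setLIntegral_const, Real.volume_Ioc, ← ENNReal.ofReal_mul (by positivity)]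
    _ ≤ ∫⁻ x in Ioc (p 0) (q 0), volume {y : ℝ | !₂[x, y] ∈
          cthickening ε S ∩ {z | z 0 ∈ Ioc (p 0) (q 0)}} :=
        setLIntegral_mono' measurableSet_Ioc hslice
    _ ≤ _ := by
        rw [EuclideanSpace.volume_eq_lintegral_volume_slice hmeas]
        exact setLIntegral_le_lintegral _ _

theorem EuclideanSpace.volume_closedBall_inter_le_add_volume_closedBall_inter_lt {ι : Type*}
    [Fintype ι] (i : ι) (p q : EuclideanSpace ℝ ι) (ε : ℝ) :
    volume (closedBall p ε ∩ {z | z i ≤ p i}) + volume (closedBall q ε ∩ {z | q i < z i}) =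
      volume (closedBall p ε) := by
  have hmeas : ∀ c : EuclideanSpace ℝ ι, MeasurableSet (closedBall c ε ∩ {z | c i < z i}) :=
    fun c => measurableSet_closedBall.inter
      (measurableSet_lt measurable_const (PiLp.continuous_apply 2 _ i).measurable)
  have htranslate : (· + (q - p)) ⁻¹' (closedBall q ε ∩ {z | q i < z i}) =
      closedBall p ε ∩ {z | p i < z i} := by
    rw [preimage_inter, preimage_add_right_closedBall, sub_sub_cancel]
    congr 1
    ext z
    simp only [mem_preimage, mem_ofPred_eq, PiLp.add_apply, PiLp.sub_apply]
    constructor <;> intro <;> linarith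
  rw [← (measurePreserving_add_right volume (q - p)).measure_preimage (hmeas q).nullMeasurableSet,
    htranslate, ← measure_union _ (hmeas p), ← inter_union_distrib_left]
  · congr 1
    ext z
    simp [le_or_gt]
  · exact disjoint_left.2 fun z h h' => not_lt_of_ge (show z i ≤ p i from h.2) h'.2

theorem IsPreconnected.ofReal_le_volume_cthickening {S : Set (ℝ²)}
    (hS : IsPreconnected S) {p q : ℝ²} (hp : p ∈ S) (hq : q ∈ S)
    (hpq : p 0 ≤ q 0) {ε : ℝ} (hε : 0 ≤ ε) :
    ENNReal.ofReal (2 * ε * (q 0 - p 0) + π * ε ^ 2) ≤ volume (cthickening ε S) := by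
  have hcoord : Measurable fun z : ℝ² => z 0 :=
    (PiLp.continuous_apply 2 _ 0).measurable
  set left := closedBall p ε ∩ {z | z 0 ≤ p 0}
  set middle := cthickening ε S ∩ {z | z 0 ∈ Ioc (p 0) (q 0)}
  set right := closedBall q ε ∩ {z | q 0 < z 0}
  have hdisk : ENNReal.ofReal (π * ε ^ 2) = volume left + volume right := by
    rw [EuclideanSpace.volume_closedBall_inter_le_add_volume_closedBall_inter_lt,
      EuclideanSpace.volume_closedBall_fin_two, ENNReal.ofReal_mul pi_nonneg,
      ENNReal.ofReal_pow hε, mul_comm]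
  have hleft_right : volume (left ∪ right) = volume left + volume right :=
    measure_union (.mono inter_subset_right inter_subset_right <| disjoint_left.2
      fun z (hl : z 0 ≤ p 0) (hr : q 0 < z 0) => hr.not_ge (hl.trans hpq))
      (measurableSet_closedBall.inter (measurableSet_lt measurable_const hcoord))
  have hunion : volume (middle ∪ (left ∪ right)) = volume middle + volume (left ∪ right) :=
    measure_union (disjoint_union_right.2
      ⟨.mono inter_subset_right inter_subset_right <| disjoint_left.2
        fun z (hm : z 0 ∈ Ioc (p 0) (q 0)) (hl : z 0 ≤ p 0) => hm.1.not_ge hl,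
      .mono inter_subset_right inter_subset_right <| disjoint_left.2
        fun z (hm : z 0 ∈ Ioc (p 0) (q 0)) (hr : q 0 < z 0) => hm.2.not_gt hr⟩)
      ((measurableSet_closedBall.inter (measurableSet_le hcoord measurable_const)).union
        (measurableSet_closedBall.inter (measurableSet_lt measurable_const hcoord)))
  have hsub : middle ∪ (left ∪ right) ⊆ cthickening ε S :=
    union_subset inter_subset_left <| union_subset
      (inter_subset_left.trans (closedBall_subset_cthickening hp ε))
      (inter_subset_left.trans (closedBall_subset_cthickening hq ε))
  calc ENNReal.ofReal (2 * ε * (q 0 - p 0) + π * ε ^ 2)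
      = ENNReal.ofReal (2 * ε * (q 0 - p 0)) + ENNReal.ofReal (π * ε ^ 2) :=
        ENNReal.ofReal_add (by have := sub_nonneg.2 hpq; positivity) (by positivity)
    _ ≤ volume middle + (volume left + volume right) := by
        rw [hdisk]; gcongr; exact hS.ofReal_le_volume_cthickening_inter_strip hp hq hε
    _ = volume (middle ∪ (left ∪ right)) := by rw [hunion, hleft_right]
    _ ≤ volume (cthickening ε S) := measure_mono hsub

theorem stmt_4_general (a b : ℝ) (hab : a ≤ b) (g : ℝ → EuclideanSpace ℝ (Fin 2))
    (hg : ContinuousOn g (Icc a b))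
    (ε : ℝ) (hε : 0 < ε) :
    ENNReal.ofReal (2 * ε * Metric.diam (g '' Icc a b) + π * ε ^ 2) ≤
      volume (cthickening ε (g '' Icc a b)) := by
  obtain ⟨z, hz, w, hw, hzw⟩ := (isCompact_Icc.image_of_continuousOn hg).exists_dist_eq_diam
    ((nonempty_Icc.2 hab).image g)
  obtain ⟨e, he⟩ := exists_linearIsometryEquiv_apply_eq (u := w - z)
    (v := EuclideanSpace.single 0 ‖w - z‖) (by simp)
  have hdiam : e w 0 - e z 0 = diam (g '' Icc a b) := by
    rw [← PiLp.sub_apply, ← map_sub, he, ← hzw, dist_comm, dist_eq_norm]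
    simp
  rw [← e.volume_cthickening_image, ← hdiam]
  have hpreconn := (isPreconnected_Icc.image g hg).image e e.continuous.continuousOn
  exact hpreconn.ofReal_le_volume_cthickening (mem_image_of_mem e hz) (mem_image_of_mem e hw)
    (sub_nonneg.1 (hdiam ▸ diam_nonneg)) hε.le

theorem stmt_4 (a b : ℝ) (hab : a ≤ b) (g : ℝ → EuclideanSpace ℝ (Fin 2))
    (hg : ContinuousOn g (Icc a b))
    (hbdd : Bornology.IsBounded (g '' Icc a b))
    (ε : ℝ) (hε : 0 < ε) :
    ENNReal.ofReal (2 * ε * Metric.diam (g '' Icc a b) + π * ε ^ 2) ≤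
      volume (cthickening ε (g '' Icc a b)) :=
  stmt_4_general a b hab g hg ε hε
end

section
/- Let φ₁ > 1 and let f ∈ C[φ₁,∞) with lim_{φ→∞} f(φ) = 0. Assume there exist positive constants m̅ and M such that for all φ ≥ φ₁: 0 < f(φ) ≤ m̅ φ^{-1}; 0 < f(φ) - f(φ+2π); and length(Γ(φ₁,φ)) ≤ M log φ. Then the spiral Γ = {(f(φ)cos φ, f(φ)sin φ) : φ ≥ φ₁} has box-counting dimension 1. -/
open Set Filter Real Metric MeasureTheory
open scoped Topology ENNReal

/-!
The area of the `ε`-neighbourhood of the spiral is squeezed between `c ε` and `C ε log (1/ε)`.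
From above: the arc `φ < 1/ε` has length at most `M log (1/ε)`, so it is covered by about
`M log (1/ε) / ε` discs of radius `ε`, while the tail `φ ≥ 1/ε` lies in the disc of radius `m ε`
about the origin. From below: the spiral is connected and meets both half-planes `x > 0` and
`x < 0`, so over every abscissa between two of its points the neighbourhood contains a vertical
segment of length `2 ε`. Both bounds give `log |Γ_ε| / log ε → 1`.
-/

section Cover

variable {α X : Type*} [PseudoMetricSpace X]

theorem exists_finset_cover_closedBall_of_dist_le_abs_sub (g : α → X) (v : α → ℝ) {s : Set α}
    {L ε : ℝ} (hε : 0 < ε) (hv : ∀ x ∈ s, v x ∈ Icc 0 L)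
    (hdist : ∀ x ∈ s, ∀ y ∈ s, dist (g x) (g y) ≤ |v x - v y|) :
    ∃ t : Finset X, t.card ≤ ⌊L / ε⌋₊ + 1 ∧ g '' s ⊆ ⋃ c ∈ t, closedBall c ε := by
  classical
  rcases s.eq_empty_or_nonempty with rfl | ⟨x₀, hx₀⟩
  · exact ⟨∅, by simp, by simp⟩
  have : Nonempty α := ⟨x₀⟩
  set bucket : α → ℕ := fun x => ⌊v x / ε⌋₊
  have hbucket : ∀ x ∈ s, (bucket x : ℝ) ≤ v x / ε ∧ v x / ε < bucket x + 1 := fun x hx =>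
    ⟨Nat.floor_le (div_nonneg (hv x hx).1 hε.le), Nat.lt_floor_add_one _⟩
  -- points of `s` in the same bucket are `ε`-close, so one representative per bucket suffices
  refine ⟨(Finset.range (⌊L / ε⌋₊ + 1)).image (g ∘ Function.invFunOn bucket s),
    Finset.card_image_le.trans (Finset.card_range _).le, ?_⟩
  rintro _ ⟨x, hx, rfl⟩
  obtain ⟨hy, hxy⟩ := Function.invFunOn_pos (f := bucket) ⟨x, hx, rfl⟩
  set y := Function.invFunOn bucket s (bucket x)
  refine mem_iUnion₂.2 ⟨g y, Finset.mem_image_of_mem _ (Finset.mem_range.2 ?_), ?_⟩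
  · exact Nat.lt_succ_of_le (Nat.floor_le_floor (div_le_div_of_nonneg_right (hv x hx).2 hε.le))
  · have hx' := hbucket x hx
    have hy' := hbucket y hy
    rw [hxy] at hy'
    have hlt : |v x / ε - v y / ε| < 1 := abs_sub_lt_iff.2 ⟨by linarith, by linarith⟩
    rw [← sub_div, abs_div, abs_of_pos hε, div_lt_one hε] at hlt
    exact mem_closedBall.2 ((hdist x hx y hy).trans hlt.le)

theorem eVariationOn.exists_finset_cover_closedBall [LinearOrder α] (g : α → X)
    {s : Set α} (hs : eVariationOn g s ≠ ∞) {ε : ℝ} (hε : 0 < ε) :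
    ∃ t : Finset X, t.card ≤ ⌊(eVariationOn g s).toReal / ε⌋₊ + 1 ∧
      g '' s ⊆ ⋃ c ∈ t, closedBall c ε := by
  set v : α → ℝ := fun x => (eVariationOn g (s ∩ Iic x)).toReal
  have hv_le : ∀ x, v x ≤ (eVariationOn g s).toReal := fun x =>
    ENNReal.toReal_mono hs (eVariationOn.mono g inter_subset_left)
  have hdist : ∀ x ∈ s, ∀ y ∈ s, x ≤ y → dist (g x) (g y) ≤ v y - v x := by
    intro x hx y hy hxy
    have hfin : ∀ t ⊆ s, eVariationOn g t ≠ ∞ := fun t ht =>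
      ne_top_of_le_ne_top hs (eVariationOn.mono g ht)
    have hadd : eVariationOn g (s ∩ Iic y) =
        eVariationOn g (s ∩ Iic x) + eVariationOn g (s ∩ Icc x y) := by
      rw [← Iic_union_Icc_eq_Iic hxy, inter_union_distrib_left]
      exact eVariationOn.union g ⟨⟨hx, le_rfl⟩, fun z hz => hz.2⟩
        ⟨⟨hx, le_rfl, hxy⟩, fun z hz => hz.2.1⟩
    have hedist := eVariationOn.edist_le g (s := s ∩ Icc x y) ⟨hx, le_rfl, hxy⟩ ⟨hy, hxy, le_rfl⟩
    simp only [v, hadd, ENNReal.toReal_add (hfin _ inter_subset_left) (hfin _ inter_subset_left),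
      add_sub_cancel_left, dist_edist]
    exact ENNReal.toReal_mono (hfin _ inter_subset_left) hedist
  refine exists_finset_cover_closedBall_of_dist_le_abs_sub g v hε
    (fun x _ => ⟨ENNReal.toReal_nonneg, hv_le x⟩) fun x hx y hy => ?_
  rcases le_total x y with h | h
  · exact (hdist x hx y hy h).trans (abs_sub_comm (v x) (v y) ▸ le_abs_self _)
  · exact dist_comm (g x) (g y) ▸ (hdist y hy x hx h).trans (le_abs_self _)

end Cover

theorem measure_cthickening_le_card_mul_of_subset_biUnion {E : Type*} [NormedAddCommGroup E]
    [MeasurableSpace E] [BorelSpace E] (μ : Measure E) [μ.IsAddHaarMeasure] {A : Set E}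
    {t : Finset E} {r δ : ℝ} (hA : A ⊆ ⋃ c ∈ t, closedBall c r) (hδ : 0 < δ) :
    μ (cthickening δ A) ≤ t.card * μ (closedBall 0 (r + 2 * δ)) := by
  have hsub : cthickening δ A ⊆ ⋃ c ∈ t, closedBall c (r + 2 * δ) := by
    refine (cthickening_subset_iUnion_closedBall_of_lt A (by positivity)
      (by linarith : δ < 2 * δ)).trans ?_
    refine iUnion₂_subset fun x hx => ?_
    obtain ⟨c, hc, hxc⟩ := mem_iUnion₂.1 (hA hx)
    refine (closedBall_subset_closedBall' ?_).trans (subset_iUnion₂_of_subset c hc subset_rfl)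
    rw [mem_closedBall] at hxc
    linarith
  calc μ (cthickening δ A) ≤ μ (⋃ c ∈ t, closedBall c (r + 2 * δ)) := measure_mono hsub
    _ ≤ ∑ c ∈ t, μ (closedBall c (r + 2 * δ)) := measure_biUnion_finset_le _ _
    _ = t.card * μ (closedBall 0 (r + 2 * δ)) := by
      simp [Measure.addHaar_closedBall_center]

theorem exists_volume_cthickening_image_le_mul_log {γ : ℝ → EuclideanSpace ℝ (Fin 2)}
    {a m M : ℝ} (hm : 0 ≤ m) (hM : 0 ≤ M) (hnorm : ∀ φ ≥ a, ‖γ φ‖ ≤ m * φ⁻¹)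
    (hvar : ∀ φ ≥ a, eVariationOn γ (Ico a φ) ≤ ENNReal.ofReal (M * log φ)) :
    ∃ C > 0, ∀ᶠ ε in 𝓝[>] 0,
      volume (cthickening ε (γ '' Ici a)) ≤ ENNReal.ofReal (C * (ε * log ε⁻¹)) := by
  refine ⟨(m + 3) ^ 2 * π * (M + 2), by positivity, ?_⟩
  filter_upwards [(tendsto_log_atTop.comp tendsto_inv_nhdsGT_zero).eventually_ge_atTop 1,
    tendsto_inv_nhdsGT_zero.eventually_ge_atTop a, Ioo_mem_nhdsGT (zero_lt_one' ℝ)]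
    with ε (hlog : 1 ≤ log ε⁻¹) (hinv : a ≤ ε⁻¹) ⟨hε, hε1⟩
  set L := M * log ε⁻¹ with hL
  have hvarε : eVariationOn γ (Ico a ε⁻¹) ≤ ENNReal.ofReal L := hvar ε⁻¹ hinv
  obtain ⟨t, htcard, htcover⟩ := eVariationOn.exists_finset_cover_closedBall γ
    (ne_top_of_le_ne_top ENNReal.ofReal_ne_top hvarε) hε
  have hcard : ((insert 0 t).card : ℝ) ≤ L / ε + 2 := by
    have hV : (eVariationOn γ (Ico a ε⁻¹)).toReal ≤ L :=
      ENNReal.toReal_le_of_le_ofReal (by positivity) hvarε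
    have hfloor := Nat.floor_le (a := (eVariationOn γ (Ico a ε⁻¹)).toReal / ε) (by positivity)
    have : ((insert 0 t).card : ℝ) ≤ t.card + 1 := by exact_mod_cast Finset.card_insert_le 0 t
    have : (t.card : ℝ) ≤ ⌊(eVariationOn γ (Ico a ε⁻¹)).toReal / ε⌋₊ + 1 := by
      exact_mod_cast htcard
    have : (eVariationOn γ (Ico a ε⁻¹)).toReal / ε ≤ L / ε := by gcongr
    linarith
  have hcover : γ '' Ici a ⊆ ⋃ c ∈ insert 0 t, closedBall c ((m + 1) * ε) := by
    rintro _ ⟨φ, hφ, rfl⟩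
    rcases lt_or_ge φ ε⁻¹ with h | h
    · obtain ⟨c, hc, hφc⟩ := mem_iUnion₂.1 (htcover ⟨φ, ⟨hφ, h⟩, rfl⟩)
      refine mem_iUnion₂.2 ⟨c, Finset.mem_insert_of_mem hc, closedBall_subset_closedBall ?_ hφc⟩
      nlinarith
    · refine mem_iUnion₂.2 ⟨0, Finset.mem_insert_self 0 t, mem_closedBall_zero_iff.2 ?_⟩
      calc ‖γ φ‖ ≤ m * φ⁻¹ := hnorm φ hφ
        _ ≤ m * ε := by gcongr; exact inv_le_of_inv_le₀ hε h
        _ ≤ (m + 1) * ε := by nlinarith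
  calc volume (cthickening ε (γ '' Ici a))
      ≤ (insert 0 t).card *
          volume (closedBall (0 : EuclideanSpace ℝ (Fin 2)) ((m + 1) * ε + 2 * ε)) :=
        measure_cthickening_le_card_mul_of_subset_biUnion volume hcover hε
    _ = ENNReal.ofReal ((insert 0 t).card * (((m + 3) * ε) ^ 2 * π)) := by
        rw [EuclideanSpace.volume_closedBall_fin_two, ← ENNReal.ofReal_pow (by positivity),
          ← ENNReal.ofReal_mul (by positivity), ← ENNReal.ofReal_natCast,
          ← ENNReal.ofReal_mul (by positivity)]
        ring_nf
    _ ≤ ENNReal.ofReal ((m + 3) ^ 2 * π * (M + 2) * (ε * log ε⁻¹)) := by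
        refine ENNReal.ofReal_le_ofReal ?_
        calc ((insert 0 t).card : ℝ) * (((m + 3) * ε) ^ 2 * π)
            ≤ (L / ε + 2) * (((m + 3) * ε) ^ 2 * π) := by gcongr
          _ = (m + 3) ^ 2 * π * ε * (M * log ε⁻¹ + 2 * ε) := by rw [hL]; field_simp
          _ ≤ (m + 3) ^ 2 * π * ε * ((M + 2) * log ε⁻¹) := by gcongr; nlinarith
          _ = _ := by ring

theorem ofReal_le_volume_cthickening_of_isPreconnected {S : Set (EuclideanSpace ℝ (Fin 2))}
    (hS : IsPreconnected S) {p q : EuclideanSpace ℝ (Fin 2)} (hp : p ∈ S) (hq : q ∈ S) {ε : ℝ}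
    (hε : 0 ≤ ε) : ENNReal.ofReal ((q 0 - p 0) * (2 * ε)) ≤ volume (cthickening ε S) := by
  have hproj : Icc (p 0) (q 0) ⊆ (fun x : EuclideanSpace ℝ (Fin 2) => x 0) '' S :=
    hS.intermediate_value hp hq (PiLp.continuous_apply 2 _ 0).continuousOn
  set e : ℝ × ℝ → EuclideanSpace ℝ (Fin 2) := WithLp.toLp 2 ∘ MeasurableEquiv.finTwoArrow.symm
  have he : MeasurePreserving e :=
    (PiLp.volume_preserving_toLp (Fin 2)).comp (volume_preserving_finTwoArrow ℝ).symm
  have hmeas : MeasurableSet (e ⁻¹' cthickening ε S) :=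
    he.measurable isClosed_cthickening.measurableSet
  have hsection : ∀ x ∈ Icc (p 0) (q 0), ∃ y : ℝ,
      Icc (y - ε) (y + ε) ⊆ Prod.mk x ⁻¹' (e ⁻¹' cthickening ε S) := by
    intro x hx
    obtain ⟨z, hz, rfl⟩ := hproj hx
    refine ⟨z 1, fun w hw => closedBall_subset_cthickening hz ε ?_⟩
    rw [mem_closedBall, EuclideanSpace.dist_eq, Real.sqrt_le_left hε]
    have hw' : |w - z 1| ≤ ε := abs_sub_le_iff.2 ⟨by linarith [hw.2], by linarith [hw.1]⟩
    simpa [e, Fin.sum_univ_two, Real.dist_eq, sq_abs] using pow_le_pow_left₀ (abs_nonneg _) hw' 2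
  rw [← he.measure_preimage isClosed_cthickening.measurableSet.nullMeasurableSet,
    Measure.volume_eq_prod, Measure.prod_apply hmeas, ENNReal.ofReal_mul' (by positivity),
    ← Real.volume_Icc, mul_comm, ← setLIntegral_const]
  calc ∫⁻ _ in Icc (p 0) (q 0), ENNReal.ofReal (2 * ε)
      ≤ ∫⁻ x in Icc (p 0) (q 0), volume (Prod.mk x ⁻¹' (e ⁻¹' cthickening ε S)) := by
        refine setLIntegral_mono' measurableSet_Icc fun x hx => ?_
        obtain ⟨y, hy⟩ := hsection x hx
        calc ENNReal.ofReal (2 * ε) = volume (Icc (y - ε) (y + ε)) := by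
              rw [Real.volume_Icc]; ring_nf
          _ ≤ _ := measure_mono hy
    _ ≤ _ := setLIntegral_le_lintegral _ _

theorem tendsto_log_const_mul_div_log {g : ℝ → ℝ} {C : ℝ} (hC : C ≠ 0)
    (hg : ∀ᶠ ε in 𝓝[>] 0, g ε ≠ 0) (h : Tendsto (fun ε => log (g ε) / log ε) (𝓝[>] 0) (𝓝 1)) :
    Tendsto (fun ε => log (C * g ε) / log ε) (𝓝[>] 0) (𝓝 1) := by
  have hconst : Tendsto (fun ε => log C / log ε) (𝓝[>] 0) (𝓝 0) :=
    tendsto_const_nhds.div_atBot tendsto_log_nhdsGT_zero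
  refine (zero_add (1 : ℝ) ▸ hconst.add h).congr' ?_
  filter_upwards [hg] with ε hε
  rw [log_mul hC hε, add_div]

theorem tendsto_log_div_log_self :
    Tendsto (fun ε => log ε / log ε) (𝓝[>] (0 : ℝ)) (𝓝 1) := by
  refine tendsto_const_nhds.congr' ?_
  filter_upwards [Ioo_mem_nhdsGT (zero_lt_one' ℝ)] with ε ⟨hε, hε1⟩
  rw [div_self (log_neg hε hε1).ne]

theorem tendsto_log_mul_log_inv_div_log :
    Tendsto (fun ε => log (ε * log ε⁻¹) / log ε) (𝓝[>] (0 : ℝ)) (𝓝 1) := by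
  have hloglog : Tendsto (fun ε => log (log ε⁻¹) / log ε⁻¹) (𝓝[>] (0 : ℝ)) (𝓝 0) :=
    isLittleO_log_id_atTop.tendsto_div_nhds_zero.comp
      (tendsto_log_atTop.comp tendsto_inv_nhdsGT_zero)
  refine (sub_zero (1 : ℝ) ▸ tendsto_log_div_log_self.sub hloglog).congr' ?_
  filter_upwards [Ioo_mem_nhdsGT (zero_lt_one' ℝ)] with ε ⟨hε, hε1⟩
  have hlog : 0 < log ε⁻¹ := log_pos ((one_lt_inv₀ hε).2 hε1)
  rw [log_mul hε.ne' hlog.ne', add_div, log_inv ε, div_neg, sub_neg_eq_add]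

theorem tendsto_log_toReal_div_log_of_le_of_le {V : ℝ → ℝ≥0∞} {c C : ℝ} (hc : 0 < c)
    (hC : 0 < C) (hlow : ∀ᶠ ε in 𝓝[>] 0, ENNReal.ofReal (c * ε) ≤ V ε)
    (hup : ∀ᶠ ε in 𝓝[>] 0, V ε ≤ ENNReal.ofReal (C * (ε * log ε⁻¹))) :
    Tendsto (fun ε => log (V ε).toReal / log ε) (𝓝[>] 0) (𝓝 1) := by
  have hbounds : ∀ᶠ ε in 𝓝[>] 0, 0 < ε * log ε⁻¹ ∧ log ε ≤ 0 ∧ 0 < c * ε ∧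
      c * ε ≤ (V ε).toReal ∧ (V ε).toReal ≤ C * (ε * log ε⁻¹) := by
    filter_upwards [hlow, hup, Ioo_mem_nhdsGT (zero_lt_one' ℝ)] with ε hlow hup ⟨hε, hε1⟩
    have hloginv : 0 < log ε⁻¹ := log_pos ((one_lt_inv₀ hε).2 hε1)
    exact ⟨by positivity, (log_neg hε hε1).le, by positivity,
      (ENNReal.ofReal_le_iff_le_toReal (ne_top_of_le_ne_top ENNReal.ofReal_ne_top hup)).1 hlow,
      ENNReal.toReal_le_of_le_ofReal (by positivity) hup⟩
  refine tendsto_of_tendsto_of_tendsto_of_le_of_le'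
    (tendsto_log_const_mul_div_log hC.ne' (hbounds.mono fun _ h => h.1.ne')
      tendsto_log_mul_log_inv_div_log)
    (tendsto_log_const_mul_div_log hc.ne' (eventually_mem_nhdsWithin.mono fun _ h => ne_of_gt h)
      tendsto_log_div_log_self) ?_ ?_
  · filter_upwards [hbounds] with ε ⟨_, hlog, hpos, hlow, hup⟩
    exact div_le_div_of_nonpos_of_le hlog (log_le_log (hpos.trans_le hlow) hup)
  · filter_upwards [hbounds] with ε ⟨_, hlog, hpos, hlow, _⟩
    exact div_le_div_of_nonpos_of_le hlog (log_le_log hpos hlow)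

theorem norm_toLp_mul_cos_mul_sin (r θ : ℝ) :
    ‖(WithLp.toLp 2 ![r * cos θ, r * sin θ] : EuclideanSpace ℝ (Fin 2))‖ = |r| := by
  rw [EuclideanSpace.norm_eq, Fin.sum_univ_two]
  simp [mul_pow, ← mul_add, sqrt_sq_eq_abs]

theorem exists_ge_cos_eq_one (a : ℝ) : ∃ φ ≥ a, cos φ = 1 := by
  obtain ⟨k, hk⟩ := exists_nat_ge (a / (2 * π))
  exact ⟨k * (2 * π), (div_le_iff₀ (by positivity)).1 hk, cos_nat_mul_two_pi k⟩

theorem stmt_9_general (φ₁ : ℝ) (f : ℝ → ℝ)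
    (hf : ContinuousOn f (Ici φ₁))
    (m M : ℝ) (hm : 0 < m) (hM : 0 < M)
    (hbd : ∀ φ ≥ φ₁, 0 < f φ ∧ f φ ≤ m * φ⁻¹)
    (hlen : ∀ φ ≥ φ₁,
      eVariationOn (fun ψ => (WithLp.toLp 2 ![f ψ * Real.cos ψ, f ψ * Real.sin ψ] :
        EuclideanSpace ℝ (Fin 2))) (Ico φ₁ φ) ≤ ENNReal.ofReal (M * Real.log φ)) :
    Tendsto (fun ε : ℝ =>
        Real.log (volume (cthickening ε
          ((fun φ => (WithLp.toLp 2 ![f φ * Real.cos φ, f φ * Real.sin φ] : EuclideanSpace ℝ (Fin 2))) ''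
            Ici φ₁))).toReal / Real.log ε)
      (nhdsWithin 0 (Ioi 0)) (nhds 1) := by
  set γ : ℝ → EuclideanSpace ℝ (Fin 2) := fun φ => WithLp.toLp 2 ![f φ * cos φ, f φ * sin φ]
  have hγ : ContinuousOn γ (Ici φ₁) :=
    (PiLp.continuous_toLp 2 _).comp_continuousOn (continuousOn_pi.2 (Fin.forall_fin_two.2
      ⟨hf.mul continuous_cos.continuousOn, hf.mul continuous_sin.continuousOn⟩))
  obtain ⟨C, hC, hup⟩ := exists_volume_cthickening_image_le_mul_log hm.le hM.le
    (fun φ hφ => by rw [norm_toLp_mul_cos_mul_sin, abs_of_pos (hbd φ hφ).1]; exact (hbd φ hφ).2)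
    hlen
  obtain ⟨φ, hφ, hcos⟩ := exists_ge_cos_eq_one φ₁
  have hφπ : φ + π ≥ φ₁ := by linarith [pi_pos]
  refine tendsto_log_toReal_div_log_of_le_of_le (c := 2 * (f φ + f (φ + π)))
    (by linarith [(hbd φ hφ).1, (hbd _ hφπ).1]) hC ?_ hup
  filter_upwards [self_mem_nhdsWithin] with ε hε
  convert ofReal_le_volume_cthickening_of_isPreconnected (isPreconnected_Ici.image γ hγ)
    (mem_image_of_mem γ hφπ) (mem_image_of_mem γ hφ) (le_of_lt hε) using 2
  simp only [γ, hcos, cos_add_pi, Matrix.cons_val_zero, mul_one, mul_neg, sub_neg_eq_add]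
  ring

theorem stmt_9 (φ₁ : ℝ) (hφ₁ : 1 < φ₁) (f : ℝ → ℝ)
    (hf : ContinuousOn f (Ici φ₁))
    (hlim : Tendsto f atTop (nhds 0))
    (m M : ℝ) (hm : 0 < m) (hM : 0 < M)
    (hbd : ∀ φ ≥ φ₁, 0 < f φ ∧ f φ ≤ m * φ⁻¹)
    (hdec : ∀ φ ≥ φ₁, 0 < f φ - f (φ + 2 * π))
    (hlen : ∀ φ ≥ φ₁,
      eVariationOn (fun ψ => (WithLp.toLp 2 ![f ψ * Real.cos ψ, f ψ * Real.sin ψ] :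
        EuclideanSpace ℝ (Fin 2))) (Ico φ₁ φ) ≤ ENNReal.ofReal (M * Real.log φ)) :
    Tendsto (fun ε : ℝ =>
        Real.log (volume (cthickening ε
          ((fun φ => (WithLp.toLp 2 ![f φ * Real.cos φ, f φ * Real.sin φ] : EuclideanSpace ℝ (Fin 2))) ''
            Ici φ₁))).toReal / Real.log ε)
      (nhdsWithin 0 (Ioi 0)) (nhds 1) :=
  stmt_9_general φ₁ f hf m M hm hM hbd hlen
end

section
/- Let φ₁ > 1 and let f ∈ C¹[φ₁,∞) with lim_{φ→∞} f(φ) = 0. Assume there exist positive constants m̅ and K such that 0 < f(φ) ≤ m̅ φ^{-1} and -K φ^{-1} ≤ f'(φ) ≤ 0 for all φ ≥ φ₁, and that f' is not identically zero on [φ,φ+2π) for each fixed φ ≥ φ₁. Then Γ = {(f(φ)cos φ, f(φ)sin φ) : φ ≥ φ₁} has box-counting dimension 1. -/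
open Set Filter Real Metric MeasureTheory

open Topology Asymptotics

/-!
Write `Γ = {f φ • e φ}` with `e φ` the unit vector of angle `φ`.

Lower bound: `Γ` is connected and contains two points at distance `D = f φ₁ + f (φ₁ + π) > 0`,
so it meets every circle of radius `r ≤ D` about one of them. Points of `Γ` on the circles of
radii `0, 2ε, 4ε, …` carry about `D / 2ε` disjoint `ε`-balls inside `Γ_ε`, hence `|Γ_ε| ≥ c ε`.

Upper bound: cut `Γ` at `φ = T = ε^(-1/2)`. The tail lies in the disc of radius `m / T = m √ε`,
whose `ε`-neighbourhood has area `O(ε)`. In the parameter `t = log φ` the bounds `|f| ≤ m / φ`,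
`|f'| ≤ K / φ` make the head `(K + m)`-Lipschitz, so it is covered by `O(log T / ε)` balls of
radius `2ε`, of total area `O(ε log (1 / ε))`. From `c ε ≤ |Γ_ε| ≤ A ε (1 - log ε)` one gets
`log |Γ_ε| / log ε → 1`.
-/

lemma tendsto_log_one_add_div_atTop : Tendsto (fun u : ℝ => log (1 + u) / u) atTop (𝓝 0) := by
  have h1 : (fun u : ℝ => log (1 + u)) =o[atTop] (fun u => 1 + u) :=
    isLittleO_log_id_atTop.comp_tendsto (tendsto_atTop_add_const_left _ 1 tendsto_id)
  have h2 : (fun u : ℝ => 1 + u) =O[atTop] id :=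
    (isLittleO_const_id_atTop (1 : ℝ)).isBigO.add (isBigO_refl _ _)
  exact (h1.trans_isBigO h2).tendsto_div_nhds_zero

lemma tendsto_log_div_log_of_le_of_le {V : ℝ → ℝ} {c A : ℝ} (hc : 0 < c) (hA : 0 < A)
    (hV : ∀ᶠ ε in 𝓝[>] 0, c * ε ≤ V ε ∧ V ε ≤ A * (ε * (1 - log ε))) :
    Tendsto (fun ε => log (V ε) / log ε) (𝓝[>] 0) (𝓝 1) := by
  have hinv : Tendsto (fun ε => (log ε)⁻¹) (𝓝[>] 0) (𝓝 0) :=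
    tendsto_inv_atBot_zero.comp tendsto_log_nhdsGT_zero
  have hlower : Tendsto (fun ε => log c / log ε) (𝓝[>] 0) (𝓝 0) := by
    simpa [div_eq_mul_inv] using hinv.const_mul (log c)
  have hupper : Tendsto (fun ε => (log A + log (1 - log ε)) / log ε) (𝓝[>] 0) (𝓝 0) := by
    have h := tendsto_log_one_add_div_atTop.comp
      (tendsto_neg_atBot_atTop.comp tendsto_log_nhdsGT_zero)
    simpa [add_mul, div_eq_mul_inv, sub_eq_add_neg] using (hinv.const_mul (log A)).add h.neg
  have hbounds : ∀ᶠ ε in 𝓝[>] 0,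
      0 < ε ∧ log ε < 0 ∧ c ≤ V ε / ε ∧ V ε / ε ≤ A * (1 - log ε) := by
    filter_upwards [hV, Ioo_mem_nhdsGT one_pos] with ε ⟨hlo, hhi⟩ ⟨hε0, hε1⟩
    refine ⟨hε0, log_neg hε0 hε1, (le_div_iff₀ hε0).2 hlo, (div_le_iff₀ hε0).2 ?_⟩
    linarith
  have hratio : Tendsto (fun ε => log (V ε / ε) / log ε) (𝓝[>] 0) (𝓝 0) := by
    refine tendsto_of_tendsto_of_tendsto_of_le_of_le' hupper hlower ?_ ?_ <;>
      filter_upwards [hbounds] with ε ⟨hε0, hlogε, hlo, hhi⟩ <;>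
      rw [div_le_div_right_of_neg hlogε]
    · rw [← log_mul hA.ne' (by linarith)]
      exact log_le_log (hc.trans_le hlo) hhi
    · exact log_le_log hc hlo
  refine (zero_add (1 : ℝ) ▸ hratio.add_const 1).congr' ?_
  filter_upwards [hbounds] with ε ⟨hε0, hlogε, hlo, _⟩
  have hV0 : 0 < V ε := (div_pos_iff_of_pos_right hε0).1 (hc.trans_le hlo)
  rw [log_div hV0.ne' hε0.ne', sub_div, div_self hlogε.ne]
  ring

section Haar

variable {E : Type*} [NormedAddCommGroup E] [MeasurableSpace E] [BorelSpace E]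
  (μ : Measure E) [μ.IsAddHaarMeasure]

lemma mul_measure_ball_le_measure_cthickening {S : Set E} (hS : IsPreconnected S)
    {p q : E} (hp : p ∈ S) (hq : q ∈ S) {ε : ℝ} (hε : 0 ≤ ε) {n : ℕ}
    (hn : 2 * ε * n ≤ dist p q) :
    (n + 1) * μ (ball 0 ε) ≤ μ (cthickening ε S) := by
  have hdist : Icc 0 (dist q p) ⊆ (dist · p) '' S := by
    simpa using (hS.image (dist · p) (continuous_id.dist continuous_const).continuousOn).Icc_subset
      (mem_image_of_mem _ hp) (mem_image_of_mem _ hq)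
  have hx : ∀ i ≤ n, ∃ x ∈ S, dist x p = 2 * ε * i := fun i hi =>
    hdist ⟨by positivity, by rw [dist_comm]; exact le_trans (by gcongr) hn⟩
  choose! x hxS hxdist using hx
  have hdisj : (Finset.range (n + 1) : Set ℕ).PairwiseDisjoint (fun i => ball (x i) ε) := by
    intro i hi j hj hij
    simp only [Finset.coe_range, mem_Iio] at hi hj
    refine ball_disjoint_ball ?_
    have h1 : (1 : ℝ) ≤ |(i : ℝ) - j| := by
      exact_mod_cast Int.one_le_abs (sub_ne_zero.2 (Nat.cast_injective.ne hij))
    calc ε + ε ≤ 2 * ε * |(i : ℝ) - j| := by nlinarith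
      _ = |dist (x i) p - dist (x j) p| := by
        rw [hxdist i (by omega), hxdist j (by omega), ← mul_sub, abs_mul,
          abs_of_nonneg (a := 2 * ε) (by positivity)]
      _ ≤ dist (x i) (x j) := abs_dist_sub_le _ _ _
  calc (n + 1) * μ (ball 0 ε) = ∑ i ∈ Finset.range (n + 1), μ (ball (x i) ε) := by
        simp [Measure.addHaar_ball_center]
    _ = μ (⋃ i ∈ Finset.range (n + 1), ball (x i) ε) :=
        (measure_biUnion_finset hdisj fun _ _ => measurableSet_ball).symm
    _ ≤ μ (cthickening ε S) := measure_mono <| iUnion₂_subset fun i hi =>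
        ball_subset_closedBall.trans (closedBall_subset_cthickening
          (hxS i (by simpa [Nat.lt_succ_iff] using hi)) ε)

lemma measure_cthickening_image_Icc_le {γ : ℝ → E} {L : NNReal} {a b : ℝ}
    (hγ : LipschitzOnWith L γ (Icc a b)) {ε h : ℝ} (hε : 0 ≤ ε) (hh : 0 < h) :
    μ (cthickening ε (γ '' Icc a b)) ≤
      (⌊(b - a) / h⌋₊ + 1) * μ (closedBall 0 (ε + L * h)) := by
  set N := ⌊(b - a) / h⌋₊
  have hcover : cthickening ε (γ '' Icc a b) ⊆
      ⋃ i ∈ Finset.range (N + 1), closedBall (γ (a + i * h)) (ε + L * h) := by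
    rw [(isCompact_Icc.image_of_continuousOn hγ.continuousOn).cthickening_eq_biUnion_closedBall hε]
    intro z hz
    obtain ⟨_, ⟨t, ⟨hat, htb⟩, rfl⟩, hz⟩ := mem_iUnion₂.1 hz
    set i := ⌊(t - a) / h⌋₊
    have hi_le : i * h ≤ t - a := (le_div_iff₀ hh).1 (Nat.floor_le (div_nonneg (by linarith) hh.le))
    have hi_lt : t - a < (i + 1) * h := (div_lt_iff₀ hh).1 (Nat.lt_floor_add_one _)
    refine mem_biUnion (x := i) (Finset.mem_range_succ_iff.2 (Nat.floor_le_floor (by gcongr))) ?_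
    have hdist : dist (γ t) (γ (a + i * h)) ≤ L * h := by
      refine (hγ.dist_le_mul _ ⟨hat, htb⟩ _
        ⟨le_add_of_nonneg_right (by positivity), by linarith⟩).trans ?_
      gcongr
      rw [Real.dist_eq, abs_le]
      constructor <;> linarith
    exact mem_closedBall.2 ((dist_triangle _ _ _).trans (add_le_add (mem_closedBall.1 hz) hdist))
  calc μ (cthickening ε (γ '' Icc a b))
      ≤ ∑ i ∈ Finset.range (N + 1), μ (closedBall (γ (a + i * h)) (ε + L * h)) :=
        (measure_mono hcover).trans (measure_biUnion_finset_le _ _)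
    _ = (N + 1) * μ (closedBall 0 (ε + L * h)) := by
        simp [Measure.addHaar_closedBall_center]

end Haar

lemma natCast_add_one_mul_ofReal (n : ℕ) (r : ℝ) :
    (n + 1) * ENNReal.ofReal r = ENNReal.ofReal ((n + 1) * r) := by
  rw [ENNReal.ofReal_mul (by positivity)]
  norm_cast

lemma volume_ball_fin_two_eq_ofReal {r : ℝ} (hr : 0 ≤ r) (x : EuclideanSpace ℝ (Fin 2)) :
    volume (ball x r) = ENNReal.ofReal (r ^ 2 * π) := by
  rw [EuclideanSpace.volume_ball_fin_two, ENNReal.ofReal_mul (by positivity),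
    ENNReal.ofReal_pow hr]

lemma volume_closedBall_fin_two_eq_ofReal {r : ℝ} (hr : 0 ≤ r) (x : EuclideanSpace ℝ (Fin 2)) :
    volume (closedBall x r) = ENNReal.ofReal (r ^ 2 * π) := by
  rw [Measure.addHaar_closedBall_eq_addHaar_ball, volume_ball_fin_two_eq_ofReal hr]

noncomputable def angleVec (φ : ℝ) : EuclideanSpace ℝ (Fin 2) := WithLp.toLp 2 ![cos φ, sin φ]

@[simp]
lemma norm_angleVec (φ : ℝ) : ‖angleVec φ‖ = 1 := by
  simp [angleVec, EuclideanSpace.norm_eq, Fin.sum_univ_two]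

lemma angleVec_add_pi (φ : ℝ) : angleVec (φ + π) = -angleVec φ := by
  ext i; fin_cases i <;> simp [angleVec]

lemma hasDerivAt_angleVec (φ : ℝ) : HasDerivAt angleVec (angleVec (φ + π / 2)) φ := by
  have h : HasDerivAt (fun φ => ![cos φ, sin φ]) ![cos (φ + π / 2), sin (φ + π / 2)] φ := by
    rw [hasDerivAt_pi]
    intro i; fin_cases i
    · simpa [cos_add_pi_div_two] using hasDerivAt_cos φ
    · simpa [sin_add_pi_div_two] using hasDerivAt_sin φ
  exact (PiLp.continuousLinearEquiv 2 ℝ _).symm.hasFDerivAt.comp_hasDerivAt φ h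

lemma continuous_angleVec : Continuous angleVec :=
  continuous_iff_continuousAt.2 fun φ => (hasDerivAt_angleVec φ).continuousAt

noncomputable def spiral (f : ℝ → ℝ) (φ : ℝ) : EuclideanSpace ℝ (Fin 2) := f φ • angleVec φ

section

variable {f f' : ℝ → ℝ} {φ₁ m K : ℝ}

lemma toLp_mul_cos_mul_sin_eq_spiral (f : ℝ → ℝ) :
    (fun φ => (WithLp.toLp 2 ![f φ * cos φ, f φ * sin φ] : EuclideanSpace ℝ (Fin 2))) =
      spiral f := by
  ext φ i; fin_cases i <;> simp [spiral, angleVec]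

@[simp]
lemma norm_spiral (f : ℝ → ℝ) (φ : ℝ) : ‖spiral f φ‖ = |f φ| := by
  simp [spiral, norm_smul]

lemma dist_spiral_add_pi (f : ℝ → ℝ) (φ : ℝ) :
    dist (spiral f φ) (spiral f (φ + π)) = |f φ + f (φ + π)| := by
  rw [dist_eq_norm, spiral, spiral, angleVec_add_pi, smul_neg, sub_neg_eq_add, ← add_smul,
    norm_smul, norm_angleVec, mul_one, Real.norm_eq_abs]

lemma lipschitzOnWith_spiral_comp_exp
    (hderiv : ∀ φ ≥ φ₁, HasDerivAt f (f' φ) φ)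
    (hf : ∀ φ ≥ φ₁, |f φ| ≤ m * φ⁻¹) (hf' : ∀ φ ≥ φ₁, |f' φ| ≤ K * φ⁻¹) :
    LipschitzOnWith (K + m).toNNReal (spiral f ∘ exp) (Ici (log φ₁)) := by
  have hexp : ∀ t ∈ Ici (log φ₁), φ₁ ≤ exp t := fun t ht =>
    (le_exp_log φ₁).trans (exp_le_exp.2 ht)
  refine (convex_Ici _).lipschitzOnWith_of_nnnorm_hasDerivWithin_le (fun t ht =>
    (((hderiv _ (hexp t ht)).smul (hasDerivAt_angleVec _)).scomp t
      (hasDerivAt_exp t)).hasDerivWithinAt) fun t ht => ?_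
  have hφ := hexp t ht
  have hpos : 0 < exp t := exp_pos t
  rw [← NNReal.coe_le_coe, coe_nnnorm, Real.coe_toNNReal']
  refine le_max_of_le_left ?_
  calc ‖exp t • (f (exp t) • angleVec (exp t + π / 2) + f' (exp t) • angleVec (exp t))‖
      ≤ exp t * (m * (exp t)⁻¹ + K * (exp t)⁻¹) := by
        rw [norm_smul, Real.norm_of_nonneg hpos.le]
        gcongr
        refine (norm_add_le _ _).trans (add_le_add ?_ ?_)
        · simpa [norm_smul] using hf _ hφ
        · simpa [norm_smul] using hf' _ hφ
    _ = K + m := by field_simp; ring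

lemma le_volume_cthickening_spiral (hf : ContinuousOn f (Ici φ₁)) {ε : ℝ} (hε : 0 < ε) :
    ENNReal.ofReal (π / 2 * |f φ₁ + f (φ₁ + π)| * ε) ≤
      volume (cthickening ε (spiral f '' Ici φ₁)) := by
  set D := |f φ₁ + f (φ₁ + π)|
  set n := ⌊D / (2 * ε)⌋₊
  have hn : D / (2 * ε) < n + 1 := Nat.lt_floor_add_one _
  have hn' : 2 * ε * n ≤ D := by
    rw [mul_comm, ← le_div_iff₀ (by positivity)]
    exact Nat.floor_le (by positivity)
  have hS : IsPreconnected (spiral f '' Ici φ₁) :=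
    isPreconnected_Ici.image _ (hf.smul continuous_angleVec.continuousOn)
  have hmem : ∀ φ ≥ φ₁, spiral f φ ∈ spiral f '' Ici φ₁ := fun φ hφ => mem_image_of_mem _ hφ
  calc ENNReal.ofReal (π / 2 * D * ε) ≤ ENNReal.ofReal ((n + 1) * (ε ^ 2 * π)) := by
        refine ENNReal.ofReal_le_ofReal ?_
        rw [div_lt_iff₀ (by positivity)] at hn
        linarith [mul_le_mul_of_nonneg_left hn.le (by positivity : (0 : ℝ) ≤ π / 2 * ε)]
    _ = (n + 1) * volume (ball (0 : EuclideanSpace ℝ (Fin 2)) ε) := by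
        rw [volume_ball_fin_two_eq_ofReal hε.le, natCast_add_one_mul_ofReal]
    _ ≤ volume (cthickening ε (spiral f '' Ici φ₁)) :=
        mul_measure_ball_le_measure_cthickening _ hS (hmem φ₁ le_rfl)
          (hmem (φ₁ + π) (by linarith [pi_pos])) hε.le (by rwa [dist_spiral_add_pi])

lemma volume_cthickening_spiral_image_Ici_le {T ε : ℝ} (hT : 0 < T) (hm : 0 ≤ m)
    (hf : ∀ φ ≥ T, |f φ| ≤ m * φ⁻¹) (hε : 0 ≤ ε) :
    volume (cthickening ε (spiral f '' Ici T)) ≤ ENNReal.ofReal ((ε + m * T⁻¹) ^ 2 * π) := by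
  have hsub : spiral f '' Ici T ⊆ closedBall 0 (m * T⁻¹) := by
    rintro _ ⟨φ, hφ, rfl⟩
    rw [mem_closedBall_zero_iff, norm_spiral]
    exact (hf φ hφ).trans (mul_le_mul_of_nonneg_left (inv_anti₀ hT hφ) hm)
  calc volume (cthickening ε (spiral f '' Ici T))
      ≤ volume (closedBall (0 : EuclideanSpace ℝ (Fin 2)) (ε + m * T⁻¹)) := by
        refine measure_mono ((cthickening_subset_of_subset ε hsub).trans_eq ?_)
        exact cthickening_closedBall hε (by positivity) _
    _ = ENNReal.ofReal ((ε + m * T⁻¹) ^ 2 * π) :=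
        volume_closedBall_fin_two_eq_ofReal (by positivity) 0

lemma volume_cthickening_spiral_image_Icc_le {T ε : ℝ} (hφ₁ : 0 < φ₁) (hφ₁T : φ₁ ≤ T)
    (hderiv : ∀ φ ≥ φ₁, HasDerivAt f (f' φ) φ)
    (hf : ∀ φ ≥ φ₁, |f φ| ≤ m * φ⁻¹) (hf' : ∀ φ ≥ φ₁, |f' φ| ≤ K * φ⁻¹)
    (hKm : 0 ≤ K + m) (hε : 0 < ε) :
    volume (cthickening ε (spiral f '' Icc φ₁ T)) ≤
      ENNReal.ofReal (4 * π * ε * ((K + m + 1) * log (T / φ₁) + ε)) := by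
  -- step `ε / (K + m + 1)` rather than `ε / (K + m)`, which may divide by zero
  set h := ε / (K + m + 1)
  have hh : 0 < h := div_pos hε (by linarith)
  have hLh : ((K + m).toNNReal : ℝ) * h ≤ ε := by
    rw [Real.coe_toNNReal _ hKm, mul_div_assoc', div_le_iff₀ (by positivity)]
    nlinarith
  have hN : (⌊(log T - log φ₁) / h⌋₊ : ℝ) ≤ (K + m + 1) * log (T / φ₁) / ε := by
    calc (⌊(log T - log φ₁) / h⌋₊ : ℝ) ≤ (log T - log φ₁) / h :=
          Nat.floor_le (div_nonneg (sub_nonneg.2 (log_le_log hφ₁ hφ₁T)) hh.le)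
      _ = (K + m + 1) * log (T / φ₁) / ε := by
          rw [log_div (hφ₁.trans_le hφ₁T).ne' hφ₁.ne', div_div_eq_mul_div, mul_comm]
  have himage : spiral f '' Icc φ₁ T = (spiral f ∘ exp) '' Icc (log φ₁) (log T) := by
    rw [image_comp, image_exp_Icc, exp_log hφ₁, exp_log (hφ₁.trans_le hφ₁T)]
  calc volume (cthickening ε (spiral f '' Icc φ₁ T))
      ≤ (⌊(log T - log φ₁) / h⌋₊ + 1) *
          volume (closedBall (0 : EuclideanSpace ℝ (Fin 2)) (2 * ε)) := by
        rw [himage]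
        refine (measure_cthickening_image_Icc_le _
          ((lipschitzOnWith_spiral_comp_exp hderiv hf hf').mono Icc_subset_Ici_self) hε.le hh).trans ?_
        gcongr
        linarith
    _ ≤ ENNReal.ofReal (4 * π * ε * ((K + m + 1) * log (T / φ₁) + ε)) := by
        rw [volume_closedBall_fin_two_eq_ofReal (by positivity), natCast_add_one_mul_ofReal]
        refine ENNReal.ofReal_le_ofReal ?_
        calc (⌊(log T - log φ₁) / h⌋₊ + 1) * ((2 * ε) ^ 2 * π)
            ≤ ((K + m + 1) * log (T / φ₁) / ε + 1) * ((2 * ε) ^ 2 * π) := by gcongr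
          _ = 4 * π * ε * ((K + m + 1) * log (T / φ₁) + ε) := by field_simp; ring

lemma volume_cthickening_spiral_le (hφ₁ : 1 ≤ φ₁) (hm : 0 ≤ m) (hK : 0 ≤ K)
    (hderiv : ∀ φ ≥ φ₁, HasDerivAt f (f' φ) φ)
    (hf : ∀ φ ≥ φ₁, |f φ| ≤ m * φ⁻¹) (hf' : ∀ φ ≥ φ₁, |f' φ| ≤ K * φ⁻¹) {ε : ℝ} (hε : 0 < ε)
    (hεφ₁ : ε ≤ (φ₁ ^ 2)⁻¹) :
    volume (cthickening ε (spiral f '' Ici φ₁)) ≤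
      ENNReal.ofReal (π * (2 * (K + m + 1) + 4 + (m + 1) ^ 2) * (ε * (1 - log ε))) := by
  have hφ₁0 : 0 < φ₁ := by linarith
  set T := (√ε)⁻¹
  have hsqrt : √ε ≤ φ₁⁻¹ := by
    simpa [sqrt_inv, sqrt_sq hφ₁0.le] using sqrt_le_sqrt hεφ₁
  have hT : φ₁ ≤ T := by simpa using inv_anti₀ (sqrt_pos.2 hε) hsqrt
  have hsqrt1 : √ε ≤ 1 := hsqrt.trans (inv_le_one_of_one_le₀ hφ₁)
  have hε1 : ε ≤ 1 := by nlinarith [sq_sqrt hε.le, sqrt_nonneg ε]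
  have hεsqrt : ε ≤ √ε := by nlinarith [sq_sqrt hε.le, sqrt_nonneg ε]
  have hlogε : 0 ≤ -log ε := neg_nonneg.2 (log_nonpos hε.le hε1)
  have hlogT : log (T / φ₁) ≤ -log ε / 2 := by
    rw [log_div (by positivity) hφ₁0.ne', log_inv, log_sqrt hε.le]
    linarith [log_nonneg hφ₁]
  have hKm : 0 ≤ K + m + 1 := by linarith
  have hlogT₀ : 0 ≤ log (T / φ₁) := log_nonneg ((one_le_div hφ₁0).2 hT)
  have htail : (ε + m * T⁻¹) ^ 2 ≤ (m + 1) ^ 2 * ε := by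
    calc (ε + m * T⁻¹) ^ 2 ≤ ((m + 1) * √ε) ^ 2 := by rw [inv_inv]; gcongr; linarith
      _ = (m + 1) ^ 2 * ε := by rw [mul_pow, sq_sqrt hε.le]
  calc volume (cthickening ε (spiral f '' Ici φ₁))
      ≤ volume (cthickening ε (spiral f '' Icc φ₁ T)) +
          volume (cthickening ε (spiral f '' Ici T)) := by
        rw [← Icc_union_Ici_eq_Ici hT, image_union, cthickening_union]
        exact measure_union_le _ _
    _ ≤ ENNReal.ofReal (4 * π * ε * ((K + m + 1) * log (T / φ₁) + ε)) +
          ENNReal.ofReal ((ε + m * T⁻¹) ^ 2 * π) :=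
        add_le_add (volume_cthickening_spiral_image_Icc_le hφ₁0 hT hderiv hf hf' (by linarith) hε)
          (volume_cthickening_spiral_image_Ici_le (hφ₁0.trans_le hT) hm
            (fun φ hφ => hf φ (hT.trans hφ)) hε.le)
    _ ≤ ENNReal.ofReal (π * (2 * (K + m + 1) + 4 + (m + 1) ^ 2) * (ε * (1 - log ε))) := by
        have hπε : 0 ≤ π * ε := by positivity
        rw [← ENNReal.ofReal_add (by positivity) (by positivity)]
        refine ENNReal.ofReal_le_ofReal ?_
        linarith [mul_le_mul_of_nonneg_left hlogT (mul_nonneg hπε hKm),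
          mul_le_mul_of_nonneg_left htail pi_pos.le, mul_le_mul_of_nonneg_left hε1 hπε,
          mul_nonneg hπε hKm, mul_nonneg hπε hlogε,
          mul_nonneg (mul_nonneg hπε (sq_nonneg (m + 1))) hlogε]

end

theorem stmt_10_general (φ₁ : ℝ) (hφ₁ : 1 < φ₁) (f f' : ℝ → ℝ)
    (hderiv : ∀ φ ≥ φ₁, HasDerivAt f (f' φ) φ)
    (m K : ℝ) (hm : 0 < m) (hK : 0 < K)
    (hbd : ∀ φ ≥ φ₁, 0 < f φ ∧ f φ ≤ m * φ⁻¹)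
    (hder_bd : ∀ φ ≥ φ₁, -K * φ⁻¹ ≤ f' φ ∧ f' φ ≤ 0) :
    Tendsto (fun ε : ℝ =>
        Real.log (volume (cthickening ε
          ((fun φ => (WithLp.toLp 2 ![f φ * Real.cos φ, f φ * Real.sin φ] : EuclideanSpace ℝ (Fin 2))) ''
            Ici φ₁))).toReal / Real.log ε)
      (nhdsWithin 0 (Ioi 0)) (nhds 1) := by
  rw [toLp_mul_cos_mul_sin_eq_spiral]
  have hf : ∀ φ ≥ φ₁, |f φ| ≤ m * φ⁻¹ := fun φ hφ =>
    (abs_of_pos (hbd φ hφ).1).trans_le (hbd φ hφ).2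
  have hf' : ∀ φ ≥ φ₁, |f' φ| ≤ K * φ⁻¹ := fun φ hφ => by
    obtain ⟨hlo, hhi⟩ := hder_bd φ hφ
    exact abs_le.2 ⟨by linarith, by linarith⟩
  have hcont : ContinuousOn f (Ici φ₁) := fun φ hφ => (hderiv φ hφ).continuousAt.continuousWithinAt
  have hgap : 0 < |f φ₁ + f (φ₁ + π)| :=
    abs_pos_of_pos (add_pos (hbd φ₁ le_rfl).1 (hbd _ (by linarith [pi_pos])).1)
  have hA : 0 < π * (2 * (K + m + 1) + 4 + (m + 1) ^ 2) :=
    mul_pos pi_pos (by linarith [sq_nonneg (m + 1)])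
  refine tendsto_log_div_log_of_le_of_le (c := π / 2 * |f φ₁ + f (φ₁ + π)|) (by positivity) hA ?_
  filter_upwards [Ioc_mem_nhdsGT (by positivity : (0 : ℝ) < (φ₁ ^ 2)⁻¹),
    Ioo_mem_nhdsGT one_pos] with ε ⟨hε, hεφ₁⟩ ⟨_, hε1⟩
  have hupper := volume_cthickening_spiral_le hφ₁.le hm.le hK.le hderiv hf hf' hε hεφ₁
  refine ⟨(ENNReal.ofReal_le_iff_le_toReal (ne_top_of_le_ne_top ENNReal.ofReal_ne_top hupper)).1
    (le_volume_cthickening_spiral hcont hε), ENNReal.toReal_le_of_le_ofReal ?_ hupper⟩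
  exact mul_nonneg hA.le (mul_nonneg hε.le (by linarith [log_nonpos hε.le hε1.le]))

theorem stmt_10 (φ₁ : ℝ) (hφ₁ : 1 < φ₁) (f f' : ℝ → ℝ)
    (hderiv : ∀ φ ≥ φ₁, HasDerivAt f (f' φ) φ)
    (hf' : ContinuousOn f' (Ici φ₁))
    (hlim : Tendsto f atTop (nhds 0))
    (m K : ℝ) (hm : 0 < m) (hK : 0 < K)
    (hbd : ∀ φ ≥ φ₁, 0 < f φ ∧ f φ ≤ m * φ⁻¹)
    (hder_bd : ∀ φ ≥ φ₁, -K * φ⁻¹ ≤ f' φ ∧ f' φ ≤ 0)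
    (hnz : ∀ φ ≥ φ₁, ∃ ψ ∈ Ico φ (φ + 2 * π), f' ψ ≠ 0) :
    Tendsto (fun ε : ℝ =>
        Real.log (volume (cthickening ε
          ((fun φ => (WithLp.toLp 2 ![f φ * Real.cos φ, f φ * Real.sin φ] : EuclideanSpace ℝ (Fin 2))) ''
            Ici φ₁))).toReal / Real.log ε)
      (nhdsWithin 0 (Ioi 0)) (nhds 1) :=
  stmt_10_general φ₁ hφ₁ f f' hderiv m K hm hK hbd hder_bd
end

section
/- Let h ∈ C¹[t₀,∞) with h(t) > 0 for t ≥ t₀ and suppose ∫_{t₀}^{∞} |2h'(t) + h(t)²| dt < ∞. Then lim_{t→∞} h(t) = 0. -/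
/-!
Since `h > 0`, the identity `∫_{t₀}^b h² = ∫_{t₀}^b (2h' + h²) - 2 (h b - h t₀)` bounds
`∫_{t₀}^b h²` by `∫ |2h' + h²| + 2 h t₀`, so `h²` is integrable on `(t₀, ∞)`. Then
`h' = ((2h' + h²) - h²) / 2` is integrable as well, so `h` has a limit `L` at infinity; an integrable
function with a limit at infinity tends to `0`, whence `L² = 0`.
-/

open Set Filter Real MeasureTheory

theorem eq_zero_of_tendsto_atTop_of_integrableOn_Ioi {E : Type*} [NormedAddCommGroup E]
    {f : ℝ → E} {a : ℝ} {L : E} (hf : Tendsto f atTop (nhds L))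
    (hfi : IntegrableOn f (Ioi a)) : L = 0 := by
  refine IntegrableAtFilter.eq_zero_of_tendsto ⟨Ioi a, Ioi_mem_atTop a, hfi⟩ (fun s hs => ?_) hf
  obtain ⟨b, hb⟩ := mem_atTop_sets.1 hs
  rw [← top_le_iff, ← volume_Ici (a := b)]
  exact measure_mono hb

theorem integrableOn_Ioi_of_intervalIntegral_bounded_of_nonneg {f : ℝ → ℝ} {a C : ℝ}
    (hfi : ∀ b ≥ a, IntervalIntegrable f volume a b) (hnn : ∀ t ≥ a, 0 ≤ f t)
    (hC : ∀ b ≥ a, ∫ t in a..b, f t ≤ C) : IntegrableOn f (Ioi a) := by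
  refine integrableOn_Ioi_of_intervalIntegral_norm_bounded C a (l := atTop) (b := id)
    (fun b => ?_) tendsto_id ?_
  · rcases le_total a b with hab | hba
    · exact (hfi b hab).1
    · simp [Ioc_eq_empty_of_le hba]
  · filter_upwards [eventually_ge_atTop a] with b hab
    calc ∫ t in a..b, ‖f t‖ = ∫ t in a..b, f t := by
          refine intervalIntegral.integral_congr fun t ht => ?_
          rw [uIcc_of_le hab] at ht
          exact Real.norm_of_nonneg (hnn t ht.1)
      _ ≤ C := hC b hab

namespace Riccati

theorem eq_sub_sq_div_two (h h' : ℝ → ℝ) : h' = fun t => (2 * h' t + h t ^ 2 - h t ^ 2) / 2 := by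
  funext t
  ring

variable {t₀ : ℝ} {h h' : ℝ → ℝ}

theorem intervalIntegrable_sq (hderiv : ∀ t ≥ t₀, HasDerivAt h (h' t) t) {b : ℝ} (hb : t₀ ≤ b) :
    IntervalIntegrable (fun t => h t ^ 2) volume t₀ b := by
  have hcont : ContinuousOn h (Icc t₀ b) := fun t ht =>
    (hderiv t ht.1).continuousAt.continuousWithinAt
  exact (hcont.pow 2).intervalIntegrable_of_Icc hb

theorem intervalIntegrable_deriv (hderiv : ∀ t ≥ t₀, HasDerivAt h (h' t) t)
    (hint : IntegrableOn (fun t => 2 * h' t + h t ^ 2) (Ici t₀)) {b : ℝ} (hb : t₀ ≤ b) :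
    IntervalIntegrable h' volume t₀ b := by
  have hg : IntervalIntegrable (fun t => 2 * h' t + h t ^ 2) volume t₀ b :=
    (intervalIntegrable_iff_integrableOn_Ioc_of_le hb).2
      (hint.mono_set (Ioc_subset_Icc_self.trans Icc_subset_Ici_self))
  rw [eq_sub_sq_div_two h h']
  exact (hg.sub (intervalIntegrable_sq hderiv hb)).div_const 2

theorem intervalIntegral_sq_eq (hderiv : ∀ t ≥ t₀, HasDerivAt h (h' t) t)
    (hint : IntegrableOn (fun t => 2 * h' t + h t ^ 2) (Ici t₀)) {b : ℝ} (hb : t₀ ≤ b) :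
    ∫ t in t₀..b, h t ^ 2 = (∫ t in t₀..b, 2 * h' t + h t ^ 2) - 2 * (h b - h t₀) := by
  have hftc : ∫ t in t₀..b, h' t = h b - h t₀ :=
    intervalIntegral.integral_eq_sub_of_hasDerivAt
      (fun t ht => hderiv t (by rw [uIcc_of_le hb] at ht; exact ht.1))
      (intervalIntegrable_deriv hderiv hint hb)
  rw [intervalIntegral.integral_add ((intervalIntegrable_deriv hderiv hint hb).const_mul 2)
    (intervalIntegrable_sq hderiv hb), intervalIntegral.integral_const_mul, hftc]
  ring

theorem intervalIntegral_sq_le (hderiv : ∀ t ≥ t₀, HasDerivAt h (h' t) t)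
    (hpos : ∀ t ≥ t₀, 0 < h t) (hint : IntegrableOn (fun t => 2 * h' t + h t ^ 2) (Ici t₀))
    {b : ℝ} (hb : t₀ ≤ b) :
    ∫ t in t₀..b, h t ^ 2 ≤ (∫ t in Ici t₀, |2 * h' t + h t ^ 2|) + 2 * h t₀ := by
  have hsub : Ioc t₀ b ⊆ Ici t₀ := Ioc_subset_Icc_self.trans Icc_subset_Ici_self
  have habs : IntegrableOn (fun t => |2 * h' t + h t ^ 2|) (Ici t₀) := hint.abs
  have hg : (∫ t in t₀..b, 2 * h' t + h t ^ 2) ≤ ∫ t in Ici t₀, |2 * h' t + h t ^ 2| :=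
    calc (∫ t in t₀..b, 2 * h' t + h t ^ 2)
        ≤ ∫ t in Ioc t₀ b, |2 * h' t + h t ^ 2| := by
          rw [intervalIntegral.integral_of_le hb]
          exact setIntegral_mono_on (hint.mono_set hsub) (habs.mono_set hsub) measurableSet_Ioc
            fun t _ => le_abs_self _
      _ ≤ ∫ t in Ici t₀, |2 * h' t + h t ^ 2| :=
          setIntegral_mono_set habs (Eventually.of_forall fun t => abs_nonneg _)
            hsub.eventuallyLE
  rw [intervalIntegral_sq_eq hderiv hint hb]
  linarith [hpos b hb]

theorem integrableOn_sq (hderiv : ∀ t ≥ t₀, HasDerivAt h (h' t) t)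
    (hpos : ∀ t ≥ t₀, 0 < h t) (hint : IntegrableOn (fun t => 2 * h' t + h t ^ 2) (Ici t₀)) :
    IntegrableOn (fun t => h t ^ 2) (Ioi t₀) :=
  integrableOn_Ioi_of_intervalIntegral_bounded_of_nonneg
    (fun _ hb => intervalIntegrable_sq hderiv hb) (fun t _ => sq_nonneg (h t))
    (fun _ hb => intervalIntegral_sq_le hderiv hpos hint hb)

theorem integrableOn_deriv (hderiv : ∀ t ≥ t₀, HasDerivAt h (h' t) t)
    (hpos : ∀ t ≥ t₀, 0 < h t) (hint : IntegrableOn (fun t => 2 * h' t + h t ^ 2) (Ici t₀)) :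
    IntegrableOn h' (Ioi t₀) := by
  rw [eq_sub_sq_div_two h h']
  exact ((hint.mono_set Ioi_subset_Ici_self).sub (integrableOn_sq hderiv hpos hint)).div_const 2

end Riccati

theorem stmt_13_general (t₀ : ℝ) (h h' : ℝ → ℝ)
    (hderiv : ∀ t ≥ t₀, HasDerivAt h (h' t) t)
    (hpos : ∀ t ≥ t₀, 0 < h t)
    (hint : IntegrableOn (fun t => 2 * h' t + (h t) ^ 2) (Ici t₀) volume) :
    Tendsto h atTop (nhds 0) := by
  have hlim : Tendsto h atTop (nhds (limUnder atTop h)) :=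
    tendsto_limUnder_of_hasDerivAt_of_integrableOn_Ioi (fun t ht => hderiv t ht.le)
      (Riccati.integrableOn_deriv hderiv hpos hint)
  have hL : limUnder atTop h = 0 :=
    pow_eq_zero_iff two_ne_zero |>.1 <|
      eq_zero_of_tendsto_atTop_of_integrableOn_Ioi (hlim.pow 2)
        (Riccati.integrableOn_sq hderiv hpos hint)
  rwa [hL] at hlim

theorem stmt_13 (t₀ : ℝ) (h h' : ℝ → ℝ)
    (hderiv : ∀ t ≥ t₀, HasDerivAt h (h' t) t)
    (hh' : ContinuousOn h' (Ici t₀))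
    (hpos : ∀ t ≥ t₀, 0 < h t)
    (hint : IntegrableOn (fun t => 2 * h' t + (h t) ^ 2) (Ici t₀) volume) :
    Tendsto h atTop (nhds 0) :=
  stmt_13_general t₀ h h' hderiv hpos hint
end

section
/- Let h ∈ C¹[t₀,∞) with h(t) > 0, and suppose ∫_{t₀}^{∞}|2h'(t)+h(t)²|dt < ∞. Let (x(t),y(t)) be a nontrivial solution of x' = y, y' = -x - h(t)y and set r(t) = √(x(t)² + y(t)²), H(t) = ∫_{t₀}^{t} h(s) ds. Then there exist a constant C > 0 and a continuous function δ on [t₀,∞) with lim_{t→∞} δ(t) = 0 such that r(t)² = e^{-H(t)} (C + δ(t)) for all t ≥ t₀. -/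
/-!
First, `h → 0`. The function `F = 2h + ∫ h²` has the integrable derivative `2h' + h²`, so it
converges; since `h > 0` this bounds `∫ h²`, hence `h²` and `h' = ((2h' + h²) - h²)/2` are
integrable, `h` converges, and an integrable function can only converge to `0`.

Second, along solutions the modified energy `E = e^H (x² + y² + h x y)` satisfies
`E' = e^H h' x y`: the damping term cancels and only `h'` survives. Once `|h| ≤ 1` we have
`e^H |x y| ≤ E`, so `|(log E)'| ≤ |h'|` is integrable and `E` tends to a limit `C > 0`. Finally
`e^H r² = E - e^H h x y` with `|e^H h x y| ≤ |h| E → 0`, so `δ = e^H r² - C` works.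
-/

open Set Filter Real MeasureTheory
open scoped Topology

theorem eq_zero_of_integrableOn_Ioi_of_tendsto {E : Type*} [NormedAddCommGroup E]
    {f : ℝ → E} {a : ℝ} {l : E} (hf : IntegrableOn f (Ioi a))
    (hl : Tendsto f atTop (𝓝 l)) : l = 0 := by
  by_contra hne
  obtain ⟨T, hT⟩ := ((hl.norm.eventually_const_lt (half_lt_self (norm_pos_iff.2 hne))).and
    (eventually_gt_atTop a)).exists_forall_of_atTop
  have hconst : IntegrableOn (fun _ => ‖l‖ / 2) (Ici T) := by
    refine Integrable.mono' (hf.mono_set (Ici_subset_Ioi.2 (hT T le_rfl).2)).norm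
      aestronglyMeasurable_const ?_
    filter_upwards [ae_restrict_mem measurableSet_Ici] with t ht
    rw [Real.norm_of_nonneg (by positivity)]
    exact (hT t ht).1.le
  simp [integrableOn_const_iff, hne] at hconst

theorem hasDerivAt_integral_of_continuousOn_Ici {f : ℝ → ℝ} {a t : ℝ}
    (hf : ContinuousOn f (Ici a)) (ht : a < t) :
    HasDerivAt (fun u => ∫ s in a..u, f s) (f t) t :=
  intervalIntegral.integral_hasDerivAt_right
    ((hf.mono (uIcc_of_le ht.le ▸ Icc_subset_Ici_self)).intervalIntegrable)
    ((hf.mono Ioi_subset_Ici_self).stronglyMeasurableAtFilter isOpen_Ioi t ht)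
    (hf.continuousAt (Ici_mem_nhds ht))

theorem continuousOn_integral_of_continuousOn_Ici {f : ℝ → ℝ} {a : ℝ}
    (hf : ContinuousOn f (Ici a)) :
    ContinuousOn (fun u => ∫ s in a..u, f s) (Ici a) := by
  intro t ht
  have hIcc : Icc a (t + 1) ∈ 𝓝[Ici a] t := by
    rw [← Ici_inter_Iic]
    exact inter_mem_nhdsWithin _ (Iic_mem_nhds (lt_add_one t))
  have hle : a ≤ t + 1 := by linarith [mem_Ici.1 ht]
  refine (intervalIntegral.continuousWithinAt_primitive (measure_singleton t) ?_)
    |>.mono_of_mem_nhdsWithin hIcc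
  rw [min_self, max_eq_right hle]
  exact (hf.mono (uIcc_of_le hle ▸ Icc_subset_Ici_self)).intervalIntegrable

theorem exists_pos_tendsto_of_integrableOn_logDeriv {ρ ρ' : ℝ → ℝ} {a : ℝ}
    (hderiv : ∀ t ∈ Ioi a, HasDerivAt ρ (ρ' t) t) (hpos : ∀ t ∈ Ioi a, 0 < ρ t)
    (hint : IntegrableOn (fun t => ρ' t / ρ t) (Ioi a)) :
    ∃ C > 0, Tendsto ρ atTop (𝓝 C) := by
  have hlog := tendsto_limUnder_of_hasDerivAt_of_integrableOn_Ioi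
    (fun t ht => (hderiv t ht).log (hpos t ht).ne') hint
  refine ⟨_, exp_pos _, ((continuous_exp.tendsto _).comp hlog).congr' ?_⟩
  filter_upwards [eventually_gt_atTop a] with t ht using exp_log (hpos t ht)

section Damping

variable {t₀ : ℝ} {h h' : ℝ → ℝ}

theorem integrableOn_sq_of_integrableOn_two_mul_deriv_add_sq
    (hderiv : ∀ t ≥ t₀, HasDerivAt h (h' t) t) (hpos : ∀ t ≥ t₀, 0 < h t)
    (hint : IntegrableOn (fun t => 2 * h' t + h t ^ 2) (Ici t₀)) :
    IntegrableOn (fun t => h t ^ 2) (Ioi t₀) := by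
  have hcont : ContinuousOn (fun t => h t ^ 2) (Ici t₀) := fun t ht =>
    ((hderiv t ht).continuousAt.pow 2).continuousWithinAt
  obtain ⟨ℓ, hF⟩ : ∃ ℓ, Tendsto (fun T => 2 * h T + ∫ s in t₀..T, h s ^ 2) atTop (𝓝 ℓ) :=
    ⟨_, tendsto_limUnder_of_hasDerivAt_of_integrableOn_Ioi
      (fun t ht => ((hderiv t (le_of_lt ht)).const_mul 2).add
        (hasDerivAt_integral_of_continuousOn_Ici hcont ht))
      (hint.mono_set Ioi_subset_Ici_self)⟩
  refine integrableOn_Ioi_of_intervalIntegral_norm_bounded (ℓ + 1) t₀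
    (fun T => (hcont.mono Icc_subset_Ici_self).integrableOn_Icc.mono_set Ioc_subset_Icc_self)
    tendsto_id ?_
  filter_upwards [hF.eventually (eventually_le_nhds (lt_add_one _)), eventually_ge_atTop t₀]
    with T hFT hT
  simp only [id, norm_pow, Real.norm_eq_abs, sq_abs]
  linarith [hpos T hT]

theorem integrableOn_deriv_of_integrableOn_two_mul_deriv_add_sq
    (hderiv : ∀ t ≥ t₀, HasDerivAt h (h' t) t) (hpos : ∀ t ≥ t₀, 0 < h t)
    (hint : IntegrableOn (fun t => 2 * h' t + h t ^ 2) (Ici t₀)) :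
    IntegrableOn h' (Ioi t₀) := by
  have hdiff : IntegrableOn (fun t => ((2 * h' t + h t ^ 2) - h t ^ 2) / 2) (Ioi t₀) :=
    ((hint.mono_set Ioi_subset_Ici_self).sub
      (integrableOn_sq_of_integrableOn_two_mul_deriv_add_sq hderiv hpos hint)).div_const 2
  exact hdiff.congr_fun (fun t _ => by ring) measurableSet_Ioi

theorem tendsto_zero_of_integrableOn_two_mul_deriv_add_sq
    (hderiv : ∀ t ≥ t₀, HasDerivAt h (h' t) t) (hpos : ∀ t ≥ t₀, 0 < h t)
    (hint : IntegrableOn (fun t => 2 * h' t + h t ^ 2) (Ici t₀)) :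
    Tendsto h atTop (𝓝 0) := by
  have hlim := tendsto_limUnder_of_hasDerivAt_of_integrableOn_Ioi
    (fun t ht => hderiv t (le_of_lt ht))
    (integrableOn_deriv_of_integrableOn_two_mul_deriv_add_sq hderiv hpos hint)
  have hsq := eq_zero_of_integrableOn_Ioi_of_tendsto
    (integrableOn_sq_of_integrableOn_two_mul_deriv_add_sq hderiv hpos hint) (hlim.pow 2)
  rw [pow_eq_zero_iff two_ne_zero] at hsq
  rwa [hsq] at hlim

end Damping

theorem abs_mul_le_sq_add_sq_div_two (a b : ℝ) : |a * b| ≤ (a ^ 2 + b ^ 2) / 2 := by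
  rw [abs_mul]
  nlinarith [two_mul_le_add_sq |a| |b|, sq_abs a, sq_abs b]

theorem sq_add_sq_div_two_le_sq_add_sq_add_mul {a b c : ℝ} (hc : |c| ≤ 1) :
    (a ^ 2 + b ^ 2) / 2 ≤ a ^ 2 + b ^ 2 + c * (a * b) := by
  have hab : |c * (a * b)| ≤ |a * b| := by
    rw [abs_mul]
    exact mul_le_of_le_one_left (abs_nonneg _) hc
  linarith [neg_abs_le (c * (a * b)), abs_mul_le_sq_add_sq_div_two a b]

noncomputable def dampedEnergy (H h x y : ℝ → ℝ) (t : ℝ) : ℝ :=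
  exp (H t) * (x t ^ 2 + y t ^ 2 + h t * (x t * y t))

section DampedEnergy

variable {H h x y : ℝ → ℝ} {t : ℝ}

theorem hasDerivAt_dampedEnergy {h' : ℝ} (hH : HasDerivAt H (h t) t) (hh : HasDerivAt h h' t)
    (hx : HasDerivAt x (y t) t) (hy : HasDerivAt y (-x t - h t * y t) t) :
    HasDerivAt (dampedEnergy H h x y) (exp (H t) * (h' * (x t * y t))) t := by
  refine (hH.exp.fun_mul (((hx.fun_pow 2).fun_add (hy.fun_pow 2)).fun_add
    (hh.fun_mul (hx.fun_mul hy)))).congr_deriv ?_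
  push_cast
  ring

theorem dampedEnergy_pos (hh : |h t| ≤ 1) (hxy : (x t, y t) ≠ (0, 0)) :
    0 < dampedEnergy H h x y t := by
  have hr : 0 < x t ^ 2 + y t ^ 2 := by
    have hne : x t ≠ 0 ∨ y t ≠ 0 := by
      contrapose! hxy
      rw [hxy.1, hxy.2]
    rcases hne with hne | hne <;> positivity
  exact mul_pos (exp_pos _)
    (by linarith [sq_add_sq_div_two_le_sq_add_sq_add_mul (a := x t) (b := y t) hh])

theorem exp_mul_abs_mul_le_dampedEnergy (hh : |h t| ≤ 1) :
    exp (H t) * |x t * y t| ≤ dampedEnergy H h x y t :=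
  mul_le_mul_of_nonneg_left
    ((abs_mul_le_sq_add_sq_div_two _ _).trans (sq_add_sq_div_two_le_sq_add_sq_add_mul hh))
    (exp_pos _).le

theorem tendsto_exp_mul_sq_add_sq_of_tendsto_dampedEnergy {C : ℝ}
    (hE : Tendsto (dampedEnergy H h x y) atTop (𝓝 C)) (hh : Tendsto h atTop (𝓝 0)) :
    Tendsto (fun t => exp (H t) * (x t ^ 2 + y t ^ 2)) atTop (𝓝 C) := by
  have hcorr : Tendsto (fun t => exp (H t) * (h t * (x t * y t))) atTop (𝓝 0) := by
    refine squeeze_zero_norm' ?_ (by simpa using hh.abs.mul hE)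
    filter_upwards [hh.abs.eventually (eventually_le_nhds (show |(0 : ℝ)| < 1 by simp))] with t ht
    calc ‖exp (H t) * (h t * (x t * y t))‖ = |h t| * (exp (H t) * |x t * y t|) := by
          rw [Real.norm_eq_abs, abs_mul, abs_mul, abs_exp]; ring
      _ ≤ |h t| * dampedEnergy H h x y t :=
          mul_le_mul_of_nonneg_left (exp_mul_abs_mul_le_dampedEnergy ht) (abs_nonneg _)
  simpa [dampedEnergy, mul_add] using hE.sub hcorr

end DampedEnergy

theorem exists_pos_tendsto_dampedEnergy {t₀ : ℝ} {h h' x y : ℝ → ℝ}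
    (hderiv : ∀ t ≥ t₀, HasDerivAt h (h' t) t) (hpos : ∀ t ≥ t₀, 0 < h t)
    (hint : IntegrableOn (fun t => 2 * h' t + h t ^ 2) (Ici t₀))
    (hx : ∀ t ≥ t₀, HasDerivAt x (y t) t) (hy : ∀ t ≥ t₀, HasDerivAt y (-x t - h t * y t) t)
    (hnontriv : ∀ t ≥ t₀, (x t, y t) ≠ (0, 0)) :
    ∃ C > 0, Tendsto (dampedEnergy (fun t => ∫ s in t₀..t, h s) h x y) atTop (𝓝 C) := by
  set H := fun t => ∫ s in t₀..t, h s
  set E := dampedEnergy H h x y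
  have hh0 := tendsto_zero_of_integrableOn_two_mul_deriv_add_sq hderiv hpos hint
  obtain ⟨T, hT⟩ := (hh0.abs.eventually (eventually_le_nhds (show |(0 : ℝ)| < 1 by simp))
    |>.and (eventually_ge_atTop t₀)).exists_forall_of_atTop
  have hsmall : ∀ t ∈ Ioi T, |h t| ≤ 1 := fun t ht => (hT t ht.le).1
  have hlt : ∀ t ∈ Ioi T, t₀ < t := fun t ht => (hT T le_rfl).2.trans_lt ht
  have hH : ∀ t ∈ Ioi T, HasDerivAt H (h t) t := fun t ht =>
    hasDerivAt_integral_of_continuousOn_Ici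
      (fun s hs => (hderiv s hs).continuousAt.continuousWithinAt) (hlt t ht)
  have hE : ∀ t ∈ Ioi T, HasDerivAt E (exp (H t) * (h' t * (x t * y t))) t := fun t ht =>
    hasDerivAt_dampedEnergy (hH t ht) (hderiv t (hlt t ht).le) (hx t (hlt t ht).le)
      (hy t (hlt t ht).le)
  have hEpos : ∀ t ∈ Ioi T, 0 < E t := fun t ht =>
    dampedEnergy_pos (hsmall t ht) (hnontriv t (hlt t ht).le)
  refine exists_pos_tendsto_of_integrableOn_logDeriv hE hEpos ?_
  -- `E'/E = h' · (e^H x y / E)`, and the second factor is bounded by `1`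
  have hcont : ContinuousOn (fun t => exp (H t) * (x t * y t) / E t) (Ioi T) :=
    continuousOn_of_forall_continuousAt fun t ht =>
      ((hH t ht).continuousAt.rexp.mul ((hx t (hlt t ht).le).continuousAt.mul
        (hy t (hlt t ht).le).continuousAt)).div (hE t ht).continuousAt (hEpos t ht).ne'
  have hbdd : ∀ t ∈ Ioi T, ‖exp (H t) * (x t * y t) / E t‖ ≤ 1 := fun t ht => by
    rw [norm_div, Real.norm_of_nonneg (hEpos t ht).le, norm_mul,
      Real.norm_of_nonneg (exp_pos _).le, div_le_one (hEpos t ht)]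
    exact exp_mul_abs_mul_le_dampedEnergy (hsmall t ht)
  have hderivInt := (integrableOn_deriv_of_integrableOn_two_mul_deriv_add_sq hderiv hpos hint)
    |>.mono_set (Ioi_subset_Ioi (hT T le_rfl).2)
  have hprod := hderivInt.mul_bdd (hcont.aestronglyMeasurable measurableSet_Ioi)
    (ae_restrict_of_forall_mem measurableSet_Ioi hbdd)
  exact IntegrableOn.congr_fun hprod (fun t _ => by ring) measurableSet_Ioi

theorem stmt_14_general (t₀ : ℝ) (h h' : ℝ → ℝ)
    (hderiv : ∀ t ≥ t₀, HasDerivAt h (h' t) t)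
    (hpos : ∀ t ≥ t₀, 0 < h t)
    (hint : IntegrableOn (fun t => 2 * h' t + (h t) ^ 2) (Ici t₀) volume)
    (x y : ℝ → ℝ)
    (hx : ∀ t ≥ t₀, HasDerivAt x (y t) t)
    (hy : ∀ t ≥ t₀, HasDerivAt y (-x t - h t * y t) t)
    (hnontriv : ∀ t ≥ t₀, (x t, y t) ≠ (0, 0)) :
    ∃ C > 0, ∃ δ : ℝ → ℝ, ContinuousOn δ (Ici t₀) ∧ Tendsto δ atTop (nhds 0) ∧
      ∀ t ≥ t₀, Real.sqrt ((x t) ^ 2 + (y t) ^ 2) ^ 2 =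
        Real.exp (-(∫ s in t₀..t, h s)) * (C + δ t) := by
  obtain ⟨C, hC, hE⟩ := exists_pos_tendsto_dampedEnergy hderiv hpos hint hx hy hnontriv
  have hr := tendsto_exp_mul_sq_add_sq_of_tendsto_dampedEnergy hE
    (tendsto_zero_of_integrableOn_two_mul_deriv_add_sq hderiv hpos hint)
  have hcont : ∀ {f f' : ℝ → ℝ}, (∀ t ≥ t₀, HasDerivAt f (f' t) t) → ContinuousOn f (Ici t₀) :=
    fun hf t ht => (hf t ht).continuousAt.continuousWithinAt
  refine ⟨C, hC, fun t => exp (∫ s in t₀..t, h s) * (x t ^ 2 + y t ^ 2) - C, ?_, ?_, ?_⟩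
  · exact ((continuousOn_integral_of_continuousOn_Ici (hcont hderiv)).rexp.mul
      (((hcont hx).pow 2).add ((hcont hy).pow 2))).sub continuousOn_const
  · simpa using hr.sub_const C
  · intro t _
    rw [sq_sqrt (by positivity), add_sub_cancel, exp_neg, inv_mul_cancel_left₀ (exp_ne_zero _)]

theorem stmt_14 (t₀ : ℝ) (h h' : ℝ → ℝ)
    (hderiv : ∀ t ≥ t₀, HasDerivAt h (h' t) t)
    (hh' : ContinuousOn h' (Ici t₀))
    (hpos : ∀ t ≥ t₀, 0 < h t)
    (hint : IntegrableOn (fun t => 2 * h' t + (h t) ^ 2) (Ici t₀) volume)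
    (x y : ℝ → ℝ)
    (hx : ∀ t ≥ t₀, HasDerivAt x (y t) t)
    (hy : ∀ t ≥ t₀, HasDerivAt y (-x t - h t * y t) t)
    (hnontriv : ∀ t ≥ t₀, (x t, y t) ≠ (0, 0)) :
    ∃ C > 0, ∃ δ : ℝ → ℝ, ContinuousOn δ (Ici t₀) ∧ Tendsto δ atTop (nhds 0) ∧
      ∀ t ≥ t₀, Real.sqrt ((x t) ^ 2 + (y t) ^ 2) ^ 2 =
        Real.exp (-(∫ s in t₀..t, h s)) * (C + δ t) :=
  stmt_14_general t₀ h h' hderiv hpos hint x y hx hy hnontriv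
end

section
/- Let h ∈ C¹[t₀,∞) with h(t) > 0, ∫_{t₀}^{∞}|2h'(t)+h(t)²|dt < ∞, and H(t) = ∫_{t₀}^{t} h(s)ds = 2α log t + O(1) as t → ∞ for some α ∈ (0,1). Let (x(t),y(t)) be a nontrivial solution of x' = y, y' = -x - h(t)y, and r(t) = √(x(t)²+y(t)²). Then 0 < liminf_{t→∞} t^α r(t) ≤ limsup_{t→∞} t^α r(t) < ∞. -/
/-!
With `w = y + h x / 2` the modified energy `E = x² + w²` satisfies
`E' = -h E + (2 h' + h²) x w / 2`, and `|x w| ≤ E / 2`. So `H + log E`, where `H = ∫ h`, has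
derivative bounded by `|2 h' + h²| / 4`, which is integrable: `H + log E` is bounded, and since
`H = 2 α log t + O(1)`, `t ^ (2 α) E` stays between two positive constants. Finally `h` is bounded
(as `h' ≤ |2 h' + h²| / 2`), so `E` is comparable to `x² + y²`.
-/

open Set Filter Real MeasureTheory

lemma abs_sub_le_integral_of_abs_deriv_le {f f' u : ℝ → ℝ} {a b : ℝ} (hab : a ≤ b)
    (hf : ∀ t ∈ Icc a b, HasDerivAt f (f' t) t) (hu : IntegrableOn u (Icc a b))
    (hf'u : ∀ t ∈ Ioo a b, |f' t| ≤ u t) :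
    |f b - f a| ≤ ∫ t in a..b, u t := by
  have hcont : ContinuousOn f (Icc a b) := fun t ht => (hf t ht).continuousAt.continuousWithinAt
  rw [abs_sub_le_iff]
  constructor
  · exact intervalIntegral.sub_le_integral_of_hasDeriv_right_of_le hab hcont
      (fun t ht => (hf t (Ioo_subset_Icc_self ht)).hasDerivWithinAt) hu
      (fun t ht => (le_abs_self _).trans (hf'u t ht))
  · have := intervalIntegral.sub_le_integral_of_hasDeriv_right_of_le hab hcont.neg
      (fun t ht => (hf t (Ioo_subset_Icc_self ht)).neg.hasDerivWithinAt) hu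
      (fun t ht => (neg_le_abs _).trans (hf'u t ht))
    simp only [Pi.neg_apply] at this
    linarith

lemma intervalIntegral_le_setIntegral_Ici {u : ℝ → ℝ} {t₀ a b : ℝ} (hu : IntegrableOn u (Ici t₀))
    (hu0 : ∀ t ≥ t₀, 0 ≤ u t) (ha : t₀ ≤ a) (hab : a ≤ b) :
    ∫ t in a..b, u t ≤ ∫ t in Ici t₀, u t := by
  rw [intervalIntegral.integral_of_le hab]
  exact setIntegral_mono_set hu ((ae_restrict_iff' measurableSet_Ici).2 (ae_of_all _ hu0))
    (Eventually.of_forall fun t ht => ha.trans ht.1.le)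

lemma le_add_half_integral_abs_two_mul_deriv_add_sq {h h' : ℝ → ℝ} {t₀ : ℝ}
    (hh : ∀ t ≥ t₀, HasDerivAt h (h' t) t)
    (hg : IntegrableOn (fun t => 2 * h' t + h t ^ 2) (Ici t₀)) {t : ℝ} (ht : t₀ ≤ t) :
    h t ≤ h t₀ + (∫ s in Ici t₀, |2 * h' s + h s ^ 2|) / 2 := by
  have hvar : h t - h t₀ ≤ ∫ s in t₀..t, |2 * h' s + h s ^ 2| / 2 :=
    intervalIntegral.sub_le_integral_of_hasDeriv_right_of_le ht
      (fun s hs => (hh s hs.1).continuousAt.continuousWithinAt)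
      (fun s hs => (hh s hs.1.le).hasDerivWithinAt)
      (IntegrableOn.mono_set (hg.abs.div_const 2) Icc_subset_Ici_self)
      (fun s _ => by nlinarith [le_abs_self (2 * h' s + h s ^ 2), sq_nonneg (h s)])
  have htail := intervalIntegral_le_setIntegral_Ici hg.abs (fun s _ => abs_nonneg _) le_rfl ht
  rw [intervalIntegral.integral_div] at hvar
  linarith

lemma sq_add_add_mul_div_two_sq_le (x y c B : ℝ) (hc : c ^ 2 ≤ B) :
    x ^ 2 + (y + c * x / 2) ^ 2 ≤ (2 + B / 2) * (x ^ 2 + y ^ 2) := by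
  nlinarith [sq_nonneg (y - c * x / 2), sq_nonneg x, sq_nonneg y,
    mul_le_mul_of_nonneg_right hc (sq_nonneg x)]

lemma abs_mul_mul_div_sq_add_sq_le (c a b : ℝ) : |c * (a * b) / (a ^ 2 + b ^ 2)| ≤ |c| / 2 := by
  rcases (add_nonneg (sq_nonneg a) (sq_nonneg b)).eq_or_lt with hab | hab
  · rw [← hab, div_zero, abs_zero]
    positivity
  · rw [abs_div, abs_mul, abs_of_pos hab, div_le_iff₀ hab]
    have : |a * b| ≤ (a ^ 2 + b ^ 2) / 2 := by
      rw [abs_le]; constructor <;> nlinarith [sq_nonneg (a + b), sq_nonneg (a - b)]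
    nlinarith [mul_le_mul_of_nonneg_left this (abs_nonneg c)]

lemma mul_sqrt_mem_Icc {s q c C : ℝ} (hs : 0 ≤ s) (hsq : s ^ 2 * q ∈ Icc c C) :
    s * √q ∈ Icc √c √C := by
  rw [← sqrt_sq hs, ← sqrt_mul (sq_nonneg s)]
  exact ⟨sqrt_le_sqrt hsq.1, sqrt_le_sqrt hsq.2⟩

lemma pos_liminf_and_limsup_lt_top_of_eventually_mem_Icc {ι : Type*} {l : Filter ι}
    {f : ι → ℝ} {c C : ℝ} (hc : 0 < c) (hf : ∀ᶠ i in l, f i ∈ Icc c C) :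
    0 < l.liminf (fun i => ENNReal.ofReal (f i)) ∧
      l.limsup (fun i => ENNReal.ofReal (f i)) < ⊤ :=
  ⟨(ENNReal.ofReal_pos.2 hc).trans_le
      (le_liminf_of_le (by isBoundedDefault) (hf.mono fun _ hi => ENNReal.ofReal_le_ofReal hi.1)),
    (limsup_le_of_le (by isBoundedDefault)
      (hf.mono fun _ hi => ENNReal.ofReal_le_ofReal hi.2)).trans_lt ENNReal.ofReal_lt_top⟩

noncomputable def energy (h x y : ℝ → ℝ) (t : ℝ) : ℝ := x t ^ 2 + (y t + h t * x t / 2) ^ 2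

section energy

variable {h h' x y : ℝ → ℝ} {t : ℝ}

lemma hasDerivAt_energy (hh : HasDerivAt h (h' t) t) (hx : HasDerivAt x (y t) t)
    (hy : HasDerivAt y (-x t - h t * y t) t) :
    HasDerivAt (energy h x y)
      (-h t * energy h x y t + (2 * h' t + h t ^ 2) / 2 * (x t * (y t + h t * x t / 2))) t := by
  refine ((hx.pow 2).add ((hy.add ((hh.mul hx).div_const 2)).pow 2)).congr_deriv ?_
  simp only [energy, Pi.add_apply, Pi.mul_apply]
  ring

lemma energy_pos (hxy : (x t, y t) ≠ (0, 0)) : 0 < energy h x y t := by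
  unfold energy
  by_cases hx0 : x t = 0
  · have hy0 : y t ≠ 0 := fun hy0 => hxy (by rw [hx0, hy0])
    simp only [hx0, mul_zero, zero_div, add_zero]
    positivity
  · positivity

lemma abs_sub_integral_add_log_energy_le {t₀ a b : ℝ} (ha : t₀ < a) (hab : a ≤ b)
    (hh : ∀ t ≥ t₀, HasDerivAt h (h' t) t)
    (hx : ∀ t ≥ t₀, HasDerivAt x (y t) t)
    (hy : ∀ t ≥ t₀, HasDerivAt y (-x t - h t * y t) t)
    (hxy : ∀ t ≥ t₀, (x t, y t) ≠ (0, 0))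
    (hg : IntegrableOn (fun t => 2 * h' t + h t ^ 2) (Ici t₀)) :
    |((∫ s in t₀..b, h s) + log (energy h x y b)) - ((∫ s in t₀..a, h s) + log (energy h x y a))|
      ≤ (∫ s in Ici t₀, |2 * h' s + h s ^ 2|) / 4 := by
  have hhc : ContinuousOn h (Ici t₀) := fun s hs => (hh s hs).continuousAt.continuousWithinAt
  have hH : ∀ s > t₀, HasDerivAt (fun u => ∫ r in t₀..u, h r) (h s) s := fun s hs =>
    intervalIntegral.integral_hasDerivAt_right
      ((hhc.mono Icc_subset_Ici_self).intervalIntegrable_of_Icc hs.le)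
      ((hhc.mono Ioi_subset_Ici_self).stronglyMeasurableAtFilter isOpen_Ioi s hs)
      (hh s hs.le).continuousAt
  have hψ : ∀ s ∈ Icc a b, HasDerivAt (fun u => (∫ r in t₀..u, h r) + log (energy h x y u))
      ((2 * h' s + h s ^ 2) / 2 * (x s * (y s + h s * x s / 2)) / energy h x y s) s := by
    intro s hs
    have hs₀ : t₀ ≤ s := ha.le.trans hs.1
    have hE : 0 < energy h x y s := energy_pos (hxy s hs₀)
    refine ((hH s (ha.trans_le hs.1)).add
      ((hasDerivAt_energy (hh s hs₀) (hx s hs₀) (hy s hs₀)).log hE.ne')).congr_deriv ?_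
    field_simp
    ring
  have hψ' : ∀ s ∈ Ioo a b, |(2 * h' s + h s ^ 2) / 2 * (x s * (y s + h s * x s / 2)) /
      energy h x y s| ≤ |2 * h' s + h s ^ 2| / 4 := fun s _ =>
    (abs_mul_mul_div_sq_add_sq_le _ _ _).trans_eq (by rw [abs_div, abs_two]; ring)
  calc _ ≤ ∫ s in a..b, |2 * h' s + h s ^ 2| / 4 :=
        abs_sub_le_integral_of_abs_deriv_le hab hψ (IntegrableOn.mono_set (hg.abs.div_const 4)
          (Icc_subset_Ici_self.trans (Ici_subset_Ici.2 ha.le))) hψ'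
    _ = (∫ s in a..b, |2 * h' s + h s ^ 2|) / 4 := intervalIntegral.integral_div ..
    _ ≤ _ := by
      gcongr
      exact intervalIntegral_le_setIntegral_Ici hg.abs (fun s _ => abs_nonneg _) ha.le hab

lemma energy_le_and_sq_add_sq_le {B : ℝ} (hB : h t ^ 2 ≤ B) :
    energy h x y t ≤ (2 + B / 2) * (x t ^ 2 + y t ^ 2) ∧
      x t ^ 2 + y t ^ 2 ≤ (2 + B / 2) * energy h x y t := by
  refine ⟨sq_add_add_mul_div_two_sq_le _ _ _ _ hB, ?_⟩
  have := sq_add_add_mul_div_two_sq_le (x t) (y t + h t * x t / 2) (-h t) _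
    ((neg_sq (h t)).trans_le hB)
  rwa [show y t + h t * x t / 2 + -h t * x t / 2 = y t by ring] at this

lemma exists_rpow_sq_mul_energy_mem_Icc {t₀ t₁ α M : ℝ}
    (hh : ∀ t ≥ t₀, HasDerivAt h (h' t) t)
    (hg : IntegrableOn (fun t => 2 * h' t + h t ^ 2) (Ici t₀))
    (hH : ∀ t ≥ t₁, |(∫ s in t₀..t, h s) - 2 * α * log t| ≤ M)
    (hx : ∀ t ≥ t₀, HasDerivAt x (y t) t)
    (hy : ∀ t ≥ t₀, HasDerivAt y (-x t - h t * y t) t)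
    (hxy : ∀ t ≥ t₀, (x t, y t) ≠ (0, 0)) :
    ∃ c > 0, ∃ C, ∀ᶠ t in atTop, (t ^ α) ^ 2 * energy h x y t ∈ Icc c C := by
  set G := ∫ s in Ici t₀, |2 * h' s + h s ^ 2|
  set T := max (max t₁ 1) (t₀ + 1)
  set ψ := fun t => (∫ s in t₀..t, h s) + log (energy h x y t)
  refine ⟨exp (ψ T - (G / 4 + M)), exp_pos _, exp (ψ T + (G / 4 + M)), ?_⟩
  filter_upwards [eventually_ge_atTop T] with t hT
  obtain ⟨⟨ht₁, ht₁'⟩, ht₀⟩ : (t₁ ≤ t ∧ 1 ≤ t) ∧ t₀ + 1 ≤ t := by simpa [T] using hT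
  have ht : 0 < t := by linarith
  have hE : (t ^ α) ^ 2 * energy h x y t = exp ((2 * α * log t - (∫ s in t₀..t, h s)) + ψ t) := by
    rw [show (2 * α * log t - (∫ s in t₀..t, h s)) + ψ t = log t * (α * 2) + log (energy h x y t) by
      simp only [ψ]; ring, exp_add, exp_log (energy_pos (hxy t (by linarith))),
      ← rpow_def_of_pos ht, rpow_mul ht.le]
    norm_cast
  have hlog : |2 * α * log t - (∫ s in t₀..t, h s)| ≤ M := by
    rw [abs_sub_comm]
    exact hH t ht₁
  have hψ : |ψ t - ψ T| ≤ G / 4 :=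
    abs_sub_integral_add_log_energy_le (by simp [T]) hT hh hx hy hxy hg
  rw [hE, mem_Icc, exp_le_exp, exp_le_exp]
  constructor <;> linarith [abs_le.1 hlog, abs_le.1 hψ]

end energy

theorem stmt_15_general (t₀ : ℝ) (h h' : ℝ → ℝ)
    (hderiv : ∀ t ≥ t₀, HasDerivAt h (h' t) t)
    (hpos : ∀ t ≥ t₀, 0 < h t)
    (hint : IntegrableOn (fun t => 2 * h' t + (h t) ^ 2) (Ici t₀) volume)
    (α : ℝ)
    (hH : ∃ M > 0, ∃ t₁ ≥ t₀, ∀ t ≥ t₁,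
      |(∫ s in t₀..t, h s) - 2 * α * Real.log t| ≤ M)
    (x y : ℝ → ℝ)
    (hx : ∀ t ≥ t₀, HasDerivAt x (y t) t)
    (hy : ∀ t ≥ t₀, HasDerivAt y (-x t - h t * y t) t)
    (hnontriv : ∀ t ≥ t₀, (x t, y t) ≠ (0, 0)) :
    0 < atTop.liminf (fun t : ℝ =>
        ENNReal.ofReal (t ^ α * Real.sqrt ((x t) ^ 2 + (y t) ^ 2))) ∧
      atTop.limsup (fun t : ℝ =>
        ENNReal.ofReal (t ^ α * Real.sqrt ((x t) ^ 2 + (y t) ^ 2))) < ⊤ := by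
  obtain ⟨M, -, t₁, -, hHM⟩ := hH
  set B := (h t₀ + (∫ s in Ici t₀, |2 * h' s + h s ^ 2|) / 2) ^ 2
  have hB : ∀ t ≥ t₀, h t ^ 2 ≤ B := fun t ht =>
    pow_le_pow_left₀ (hpos t ht).le (le_add_half_integral_abs_two_mul_deriv_add_sq hderiv hint ht) 2
  obtain ⟨c, hc, C, hE⟩ := exists_rpow_sq_mul_energy_mem_Icc hderiv hint hHM hx hy hnontriv
  have hK : 0 < 2 + B / 2 := by positivity
  refine pos_liminf_and_limsup_lt_top_of_eventually_mem_Icc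
    (c := √(c / (2 + B / 2))) (C := √((2 + B / 2) * C)) (by positivity) ?_
  filter_upwards [hE, eventually_ge_atTop t₀, eventually_gt_atTop 0] with t hEt ht₀ ht
  obtain ⟨hE_le, hr_le⟩ := energy_le_and_sq_add_sq_le (x := x) (y := y) (hB t ht₀)
  have hs : 0 ≤ (t ^ α) ^ 2 := sq_nonneg _
  refine mul_sqrt_mem_Icc (rpow_nonneg ht.le α) ⟨?_, ?_⟩
  · rw [div_le_iff₀ hK]
    nlinarith [mul_le_mul_of_nonneg_left hE_le hs, hEt.1]
  · nlinarith [mul_le_mul_of_nonneg_left hr_le hs, hEt.2]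

theorem stmt_15 (t₀ : ℝ) (h h' : ℝ → ℝ)
    (hderiv : ∀ t ≥ t₀, HasDerivAt h (h' t) t)
    (hh' : ContinuousOn h' (Ici t₀))
    (hpos : ∀ t ≥ t₀, 0 < h t)
    (hint : IntegrableOn (fun t => 2 * h' t + (h t) ^ 2) (Ici t₀) volume)
    (α : ℝ) (hα : α ∈ Ioo (0:ℝ) 1)
    (hH : ∃ M > 0, ∃ t₁ ≥ t₀, ∀ t ≥ t₁,
      |(∫ s in t₀..t, h s) - 2 * α * Real.log t| ≤ M)
    (x y : ℝ → ℝ)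
    (hx : ∀ t ≥ t₀, HasDerivAt x (y t) t)
    (hy : ∀ t ≥ t₀, HasDerivAt y (-x t - h t * y t) t)
    (hnontriv : ∀ t ≥ t₀, (x t, y t) ≠ (0, 0)) :
    0 < atTop.liminf (fun t : ℝ =>
        ENNReal.ofReal (t ^ α * Real.sqrt ((x t) ^ 2 + (y t) ^ 2))) ∧
      atTop.limsup (fun t : ℝ =>
        ENNReal.ofReal (t ^ α * Real.sqrt ((x t) ^ 2 + (y t) ^ 2))) < ⊤ :=
  stmt_15_general t₀ h h' hderiv hpos hint α hH x y hx hy hnontriv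
end
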